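/- arXiv:1702.05113 — 5 statements merged into one kernel-verified Lean document; each statement's English description precedes it below -/
import Mathlib

section
/- Fix r ≥ 1, n ≥ r+1 and θ ∈ ℝ^n, and let f : ℝ^n → ℝ be f(α) := ‖D^{(r)}α‖₁. A vector v ∈ ℝ^n belongs to the subdifferential ∂f(θ) if and only if: (i) Σ_{i=j}^n C(r+i−j−1, r−1)·v_i = 0 for every 1 ≤ j ≤ r; and (ii) for every r < j ≤ n, Σ_{i=j}^n C(r+i−j−1, r−1)·v_i equals sgn((D^{(r)}θ)_{j−r}) whenever (D^{(r)}θ)_{j−r} ≠ 0, and lies in the interval [−1, 1] whenever (D^{(r)}θ)_{j−r} = 0. Here C(a,b) denotes the binomial coefficient and sgn(x) the sign of a nonzero real x. -/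
open MeasureTheory ProbabilityTheory
open scoped BigOperators

noncomputable section

/-- Zero-padding of a finite vector to a sequence on `ℕ`. -/
def pad {n : ℕ} (θ : Fin n → ℝ) : ℕ → ℝ := fun t => if h : t < n then θ ⟨t, h⟩ else 0

/-- First-order forward difference of a sequence. -/
def dseq (f : ℕ → ℝ) : ℕ → ℝ := fun t => f (t + 1) - f t

/-- `DD r θ t` is the `t`-th entry (0-indexed) of the `r`-th order difference `D^{(r)} θ`
of the vector `θ ∈ ℝ^n`; only the entries `t < n - r` are meaningful. -/
def DD (r : ℕ) {n : ℕ} (θ : Fin n → ℝ) : ℕ → ℝ := dseq^[r] (pad θ)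

/-- The ℓ¹ norm `‖D^{(r)} θ‖₁`. -/
def Dl1 (r : ℕ) {n : ℕ} (θ : Fin n → ℝ) : ℝ := ∑ t ∈ Finset.range (n - r), |DD r θ t|

/-- The number of nonzero entries `‖D^{(r)} θ‖₀`. -/
def Dl0 (r : ℕ) {n : ℕ} (θ : Fin n → ℝ) : ℕ :=
  ((Finset.range (n - r)).filter fun t => DD r θ t ≠ 0).card

/-- Squared Euclidean norm. -/
def sqnorm {n : ℕ} (x : Fin n → ℝ) : ℝ := ∑ i, x i ^ 2

/-- Euclidean norm. -/
def eunorm {n : ℕ} (x : Fin n → ℝ) : ℝ := Real.sqrt (sqnorm x)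

/-- `V^{(r)}(θ) = n^{r-1} ‖D^{(r)} θ‖₁`. -/
def Vr (r : ℕ) {n : ℕ} (θ : Fin n → ℝ) : ℝ := (n : ℝ) ^ ((r : ℤ) - 1) * Dl1 r θ

/-- The constraint set `K^{(r)}(V) = {θ : ‖D^{(r)} θ‖₁ ≤ V n^{1-r}}`. -/
def Kset (r n : ℕ) (V : ℝ) : Set (Fin n → ℝ) := {θ | Dl1 r θ ≤ V * (n : ℝ) ^ (1 - (r : ℤ))}

/-- `est` is a least-squares projection onto the set `K`. -/
def IsProjOn {n : ℕ} (est : (Fin n → ℝ) → Fin n → ℝ) (K : Set (Fin n → ℝ)) : Prop :=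
  ∀ y, est y ∈ K ∧ ∀ θ ∈ K, sqnorm (y - est y) ≤ sqnorm (y - θ)

/-- `est` is the penalized trend filtering estimator of order `r` with noise level `σ`
and tuning parameter `lam`: it minimizes `½‖y - θ‖² + σ n^{r-1} lam ‖D^{(r)} θ‖₁`. -/
def IsPenEst (r : ℕ) {n : ℕ} (σ lam : ℝ) (est : (Fin n → ℝ) → Fin n → ℝ) : Prop :=
  ∀ y θ, 1 / 2 * sqnorm (y - est y) + σ * (n : ℝ) ^ ((r : ℤ) - 1) * lam * Dl1 r (est y) ≤
    1 / 2 * sqnorm (y - θ) + σ * (n : ℝ) ^ ((r : ℤ) - 1) * lam * Dl1 r θ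

/-- The Gaussian measure `N_n(0, σ² I_n)` on `ℝ^n`. -/
def gaussVec (n : ℕ) (σ : ℝ) : Measure (Fin n → ℝ) :=
  Measure.pi fun _ => gaussianReal 0 (σ ^ 2).toNNReal

/-- The risk `R(θ̂, θ*) = (1/n) E ‖θ̂(θ* + ξ) - θ*‖²` for `ξ ∼ N_n(0, σ² I_n)`. -/
def risk {n : ℕ} (σ : ℝ) (est : (Fin n → ℝ) → Fin n → ℝ) (θs : Fin n → ℝ) : ℝ :=
  1 / (n : ℝ) * ∫ ξ, sqnorm (est (θs + ξ) - θs) ∂gaussVec n σ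

/-- `j` (with signs `sg`) enumerates, in increasing order and paper (1-indexed) convention,
exactly the `r`-th order knots of `θ ∈ ℝ^n`; an index `2 ≤ m ≤ n - r + 1` is a knot when
`(D^{(r-1)}θ)_{m-1} ≠ (D^{(r-1)}θ)_m` (1-indexed entries), and its sign is `+1` when
`(D^{(r-1)}θ)_{m-1} < (D^{(r-1)}θ)_m` and `-1` otherwise. -/
def IsKnotSeq (r n : ℕ) (θ : Fin n → ℝ) (k : ℕ) (j : Fin k → ℕ) (sg : Fin k → ℝ) : Prop :=
  StrictMono j ∧ (∀ i, 2 ≤ j i ∧ j i ≤ n - r + 1) ∧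
    (∀ m : ℕ, 2 ≤ m → m ≤ n - r + 1 →
      (DD (r - 1) θ (m - 2) ≠ DD (r - 1) θ (m - 1) ↔ ∃ i, j i = m)) ∧
    ∀ i, sg i = if DD (r - 1) θ (j i - 2) < DD (r - 1) θ (j i - 1) then 1 else -1

/-- Extended knot sequence: `jext 0 = j_0 = 1`, `jext i = j_i` for `1 ≤ i ≤ k`, and
`jext (k+1) = j_{k+1} = n - r + 2`. -/
def jext (n r k : ℕ) (j : Fin k → ℕ) : ℕ → ℕ := fun i =>
  if i = 0 then 1 else if h : i - 1 < k then j ⟨i - 1, h⟩ else n - r + 2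

/-- Extended sign sequence: `sgext i = 𝔯_i` for `1 ≤ i ≤ k` and `0` otherwise. -/
def sgext (k : ℕ) (sg : Fin k → ℝ) : ℕ → ℝ := fun i =>
  if h : 0 < i ∧ i - 1 < k then sg ⟨i - 1, h.2⟩ else 0

/-- The lengths `n_0 = j_1 + r - 2`, `n_i = j_{i+1} - j_i` (`1 ≤ i ≤ k-1`),
`n_k = n - r + 2 - j_k`. -/
def nlen (n r k : ℕ) (j : Fin k → ℕ) : ℕ → ℕ := fun i =>
  if i = 0 then jext n r k j 1 + r - 2 else jext n r k j (i + 1) - jext n r k j i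

/-- `n_{i*} = min(n_i, n/(k+1))`. -/
def nstar (n r k : ℕ) (j : Fin k → ℕ) (i : ℕ) : ℝ :=
  min (nlen n r k j i : ℝ) ((n : ℝ) / ((k : ℝ) + 1))

/-- `δ_r(θ)²` defined from the knot data of `θ`. -/
def deltaSq (n r k : ℕ) (j : Fin k → ℕ) (sg : Fin k → ℝ) : ℝ :=
  nstar n r k j 0 ^ (1 - 2 * (r : ℤ)) + nstar n r k j k ^ (1 - 2 * (r : ℤ)) +
    ∑ i ∈ Finset.Ico 1 k,
      if sgext k sg i ≠ sgext k sg (i + 1) then nstar n r k j i ^ (1 - 2 * (r : ℤ)) else 0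

/-- `Δ_r(θ)` defined from the knot data of `θ`. -/
def DeltaR (n r k : ℕ) (j : Fin k → ℕ) (sg : Fin k → ℝ) : ℝ :=
  ((k : ℝ) + 1) / (n : ℝ) * Real.log (Real.exp 1 * (n : ℝ) / ((k : ℝ) + 1)) +
    deltaSq n r k j sg / (n : ℝ) * ((n : ℝ) / ((k : ℝ) + 1)) ^ (2 * (r : ℤ) - 1) *
      Real.log (Real.exp 1 * (n : ℝ) / ((k : ℝ) + 1)) +
    (Real.sqrt (deltaSq n r k j sg) / Real.sqrt (n : ℝ)) ^ ((1 : ℝ) / (r : ℝ))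

/-- The minimum length condition with constant `c`: `n_i ≥ c n/(k+1)` for every `0 ≤ i ≤ k`
with `𝔯_i ≠ 𝔯_{i+1}` (where `𝔯_0 = 𝔯_{k+1} = 0`). -/
def MinLen (n r k : ℕ) (j : Fin k → ℕ) (sg : Fin k → ℝ) (c : ℝ) : Prop :=
  ∀ i ≤ k, sgext k sg i ≠ sgext k sg (i + 1) →
    c * (n : ℝ) / ((k : ℝ) + 1) ≤ (nlen n r k j i : ℝ)

/-- The subdifferential of `g` at `θ`. -/
def subdiff {n : ℕ} (g : (Fin n → ℝ) → ℝ) (θ : Fin n → ℝ) : Set (Fin n → ℝ) :=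
  {v | ∀ y, g θ + ∑ i, v i * (y i - θ i) ≤ g y}

/-- `v` is the minimum-norm element of `S`. -/
def IsMinNormIn {n : ℕ} (v : Fin n → ℝ) (S : Set (Fin n → ℝ)) : Prop :=
  v ∈ S ∧ ∀ w ∈ S, eunorm v ≤ eunorm w

/-- `c • S`. -/
def scaleSet {n : ℕ} (c : ℝ) (S : Set (Fin n → ℝ)) : Set (Fin n → ℝ) := (c • ·) '' S

/-- The cone generated by `S`: `⋃_{c ≥ 0} c • S`. -/
def coneOf {n : ℕ} (S : Set (Fin n → ℝ)) : Set (Fin n → ℝ) := ⋃ c ∈ Set.Ici (0 : ℝ), scaleSet c S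

/-- Euclidean distance from a point to a set. -/
def distSet {n : ℕ} (z : Fin n → ℝ) (S : Set (Fin n → ℝ)) : ℝ :=
  sInf ((fun v => eunorm (z - v)) '' S)

/-- Gaussian mean squared distance `D(S) = E dist²(Z, S)`, `Z ∼ N_n(0, I_n)`. -/
def gaussMSD {n : ℕ} (S : Set (Fin n → ℝ)) : ℝ := ∫ z, distSet z S ^ 2 ∂gaussVec n 1

/-- `lam z` is, for each `z`, the minimizer over `λ ≥ 0` of `dist(z, λ S)`. -/
def IsLamFun {n : ℕ} (S : Set (Fin n → ℝ)) (lam : (Fin n → ℝ) → ℝ) : Prop :=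
  ∀ z, 0 ≤ lam z ∧ ∀ μ : ℝ, 0 ≤ μ → distSet z (scaleSet (lam z) S) ≤ distSet z (scaleSet μ S)

/-- Euclidean covering number of `K` at scale `ε`. -/
def covN {n : ℕ} (ε : ℝ) (K : Set (Fin n → ℝ)) : ℕ :=
  sInf {m : ℕ | ∃ a : Fin m → Fin n → ℝ, ∀ x ∈ K, ∃ i, eunorm (x - a i) ≤ ε}

/-- `K` `t`-shatters the (finite) index set `A`. -/
def fatShatters {n : ℕ} (K : Set (Fin n → ℝ)) (t : ℝ) (A : Finset (Fin n)) : Prop :=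
  ∃ h : Fin n → ℝ, ∀ S : Finset (Fin n), S ⊆ A →
    ∃ θ ∈ K, (∀ i ∈ S, θ i ≤ h i) ∧ ∀ i ∈ A, i ∉ S → h i + t ≤ θ i

/-- The fat shattering dimension `v(K, t)`. -/
def fatDim {n : ℕ} (K : Set (Fin n → ℝ)) (t : ℝ) : ℕ :=
  sSup {m : ℕ | ∃ A : Finset (Fin n), A.card = m ∧ fatShatters K t A}

/-- The tangent cone of `K` at `θ`. -/
def tanCone {n : ℕ} (K : Set (Fin n → ℝ)) (θ : Fin n → ℝ) : Set (Fin n → ℝ) :=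
  closure {w | ∃ t : ℝ, 0 ≤ t ∧ ∃ η ∈ K, w = t • (η - θ)}

/-- `V_{a,b}(f) = Σ_{m=a+1}^{b} |f_m - f_{m-1}|` for the (paper 1-indexed) sequence whose
`m`-th entry is `f (m-1)`. -/
def Vab (f : ℕ → ℝ) (a b : ℕ) : ℝ := ∑ t ∈ Finset.Ico (a - 1) (b - 1), |f (t + 1) - f t|

/-- `Acoef r n v j = Σ_{i=j}^n C(r+i-j-1, r-1) v_i` (paper 1-indexed). -/
def Acoef (r n : ℕ) (v : Fin n → ℝ) (jj : ℕ) : ℝ :=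
  ∑ i : Fin n, (if jj ≤ i.1 + 1 then ((r + (i.1 + 1) - jj - 1).choose (r - 1) : ℝ) else 0) * v i

/-- The class `C_r({a_i}, {s_i})`. -/
def Cras (r n : ℕ) (a s : ℕ → ℝ) : Set (Fin n → ℝ) :=
  {θ | (∀ i < r - 1, a i ≤ DD i θ 0 ∧ DD i θ 0 ≤ a i + s i) ∧
    a (r - 1) ≤ DD (r - 1) θ 0 ∧
    (∀ t : ℕ, t + 1 ≤ n - r → DD (r - 1) θ t ≤ DD (r - 1) θ (t + 1)) ∧
    DD (r - 1) θ (n - r) ≤ a (r - 1) + s (r - 1)}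

/-- The class `C_r(a, V) = {θ : a ≤ (D^{(r-1)}θ)_1 ≤ ⋯ ≤ (D^{(r-1)}θ)_{n-r+1} ≤ a + V}`. -/
def CrMono (r n : ℕ) (a V : ℝ) : Set (Fin n → ℝ) :=
  {θ | a ≤ DD (r - 1) θ 0 ∧
    (∀ t : ℕ, t + 1 ≤ n - r → DD (r - 1) θ t ≤ DD (r - 1) θ (t + 1)) ∧
    DD (r - 1) θ (n - r) ≤ a + V}


-- my auxiliary defs
def dpad (g : ℕ → ℝ) : ℕ → ℝ := fun t => g t - if t = 0 then 0 else g (t - 1)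
def psum (g : ℕ → ℝ) : ℕ → ℝ := fun t => ∑ i ∈ Finset.range (t + 1), g i
def Sop (n : ℕ) (w : ℕ → ℝ) : ℕ → ℝ := fun j => ∑ i ∈ Finset.Ico j n, w i

lemma psum_dpad (g : ℕ → ℝ) (t : ℕ) : ∑ j ∈ Finset.range (t + 1), dpad g j = g t := by
  induction t with
  | zero => simp [dpad]
  | succ t ih =>
    rw [Finset.sum_range_succ, ih]
    simp [dpad]

lemma abel1 (n : ℕ) (w g : ℕ → ℝ) :
    ∑ i ∈ Finset.range n, w i * g i = ∑ j ∈ Finset.range n, Sop n w j * dpad g j := by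
  have h : ∀ j ∈ Finset.range n, Sop n w j * dpad g j
      = ∑ i ∈ Finset.Ico j n, w i * dpad g j := by
    intro j _; rw [Sop, Finset.sum_mul]
  rw [Finset.sum_congr rfl h]
  rw [Finset.range_eq_Ico, Finset.sum_Ico_Ico_comm]
  refine Finset.sum_congr rfl fun i hi => ?_
  rw [← Finset.mul_sum]
  congr 1
  have : Finset.Ico 0 (i + 1) = Finset.range (i + 1) := by rw [Finset.range_eq_Ico]
  rw [this, psum_dpad]

lemma abelr (r n : ℕ) (w g : ℕ → ℝ) :
    ∑ i ∈ Finset.range n, w i * g i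
      = ∑ j ∈ Finset.range n, (Sop n)^[r] w j * dpad^[r] g j := by
  induction r generalizing w g with
  | zero => simp
  | succ r ih =>
    rw [abel1, ih (Sop n w) (dpad g)]
    simp [Function.iterate_succ_apply]

lemma Sop_iter_closed (r n : ℕ) (hr : 1 ≤ r) (w : ℕ → ℝ) (j : ℕ) :
    (Sop n)^[r] w j = ∑ i ∈ Finset.Ico j n, ((i - j + r - 1).choose (r - 1) : ℝ) * w i := by
  induction r generalizing j with
  | zero => omega
  | succ r ih =>
    rcases Nat.eq_or_lt_of_le hr with h1 | h1
    · simp only [← h1]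
      simp [Sop]
    · have hr' : 1 ≤ r := by omega
      rw [Function.iterate_succ_apply', Sop]
      have : ∀ jj ∈ Finset.Ico j n, (Sop n)^[r] w jj
          = ∑ i ∈ Finset.Ico jj n, ((i - jj + r - 1).choose (r - 1) : ℝ) * w i :=
        fun jj _ => ih hr' jj
      rw [Finset.sum_congr rfl this, Finset.sum_Ico_Ico_comm]
      refine Finset.sum_congr rfl fun i hi => ?_
      simp only [Finset.mem_Ico] at hi
      rw [← Finset.sum_mul]
      congr 1
      -- ∑ jj ∈ Ico j (i+1), C (i - jj + r - 1) (r-1) = C (i - j + r) r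
      have key : ∑ jj ∈ Finset.Ico j (i + 1), ((i - jj + r - 1).choose (r - 1) : ℝ)
          = ((i - j + r).choose r : ℝ) := by
        have hs : ∑ jj ∈ Finset.Ico j (i + 1), (i - jj + r - 1).choose (r - 1)
            = ∑ m ∈ Finset.Icc (r - 1) (i - j + r - 1), m.choose (r - 1) := by
          apply Finset.sum_nbij' (fun jj => i - jj + r - 1) (fun m => i + r - 1 - m)
          · intro a ha; simp only [Finset.mem_Ico] at ha; simp only [Finset.mem_Icc]; omega
          · intro a ha; simp only [Finset.mem_Icc] at ha; simp only [Finset.mem_Ico]; omega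
          · intro a ha; simp only [Finset.mem_Ico] at ha; omega
          · intro a ha; simp only [Finset.mem_Icc] at ha; omega
          · intro a ha; rfl
        rw [← Nat.cast_sum, hs, Nat.sum_Icc_choose]
        norm_cast
        have e1 : i - j + r - 1 + 1 = i - j + r := by omega
        have e2 : r - 1 + 1 = r := by omega
        rw [e1, e2]
      rw [key]
      have e3 : i - j + (r + 1) - 1 = i - j + r := by omega
      have e4 : r + 1 - 1 = r := by omega
      rw [e3, e4]

lemma Acoef_eq_Sop (r n : ℕ) (hr : 1 ≤ r) (v : Fin n → ℝ) (j : ℕ) (hj : j < n) :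
    Acoef r n v (j + 1) = (Sop n)^[r] (pad v) j := by
  rw [Sop_iter_closed r n hr, Acoef]
  have hpad : ∀ i : Fin n, v i = pad v i.1 := by
    intro i; simp [pad, i.isLt]
  have step1 : (∑ i : Fin n, (if j + 1 ≤ i.1 + 1 then ((r + (i.1 + 1) - (j + 1) - 1).choose (r - 1) : ℝ) else 0) * v i)
      = ∑ i ∈ Finset.range n, (if j + 1 ≤ i + 1 then ((r + (i + 1) - (j + 1) - 1).choose (r - 1) : ℝ) else 0) * pad v i := by
    rw [← Fin.sum_univ_eq_sum_range (fun i => (if j + 1 ≤ i + 1 then ((r + (i + 1) - (j + 1) - 1).choose (r - 1) : ℝ) else 0) * pad v i)]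
    exact Finset.sum_congr rfl fun i _ => by rw [← hpad]
  rw [step1, Finset.range_eq_Ico, ← Finset.sum_Ico_consecutive _ (Nat.zero_le j) (le_of_lt hj)]
  have z1 : ∑ i ∈ Finset.Ico 0 j, (if j + 1 ≤ i + 1 then ((r + (i + 1) - (j + 1) - 1).choose (r - 1) : ℝ) else 0) * pad v i = 0 := by
    apply Finset.sum_eq_zero
    intro i hi; simp only [Finset.mem_Ico] at hi
    rw [if_neg (by omega)]; ring
  rw [z1, zero_add]
  refine Finset.sum_congr rfl fun i hi => ?_
  simp only [Finset.mem_Ico] at hi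
  rw [if_pos (by omega)]
  have e : r + (i + 1) - (j + 1) - 1 = i - j + r - 1 := by omega
  rw [e]

lemma key_identity (r n : ℕ) (hr : 1 ≤ r) (v α : Fin n → ℝ) :
    ∑ i, v i * α i = ∑ j ∈ Finset.range n, Acoef r n v (j + 1) * dpad^[r] (pad α) j := by
  have h1 : ∑ i, v i * α i = ∑ i ∈ Finset.range n, pad v i * pad α i := by
    rw [← Fin.sum_univ_eq_sum_range (fun i => pad v i * pad α i)]
    refine Finset.sum_congr rfl fun i _ => by simp [pad, i.isLt]
  rw [h1, abelr r n]
  exact Finset.sum_congr rfl fun j hj =>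
    by rw [Acoef_eq_Sop r n hr v j (Finset.mem_range.mp hj)]

lemma dpad_psum (g : ℕ → ℝ) : dpad (psum g) = g := by
  funext t
  cases t with
  | zero => simp [dpad, psum]
  | succ t => simp [dpad, psum, Finset.sum_range_succ]

lemma dpad_iter_psum (r : ℕ) (g : ℕ → ℝ) : dpad^[r] (psum^[r] g) = g := by
  induction r generalizing g with
  | zero => rfl
  | succ r ih =>
    have hp : psum^[r+1] g = psum (psum^[r] g) := Function.iterate_succ_apply' psum r g
    rw [hp, Function.iterate_succ_apply, dpad_psum, ih]

lemma dpad_iter_congr (k : ℕ) (g1 g2 : ℕ → ℝ) (j : ℕ) (h : ∀ t ≤ j, g1 t = g2 t) :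
    dpad^[k] g1 j = dpad^[k] g2 j := by
  induction k generalizing j with
  | zero => exact h j le_rfl
  | succ k ih =>
    rw [Function.iterate_succ_apply', Function.iterate_succ_apply']
    simp only [dpad]
    rw [ih j h]
    congr 1
    split
    · rfl
    · exact ih (j - 1) fun t ht => h t (by omega)

lemma dpad_iter_ge (r t : ℕ) (g : ℕ → ℝ) (h : r ≤ t) :
    dpad^[r] g t = dseq^[r] g (t - r) := by
  induction r generalizing t with
  | zero => simp
  | succ r ih =>
    rw [Function.iterate_succ_apply', dpad]
    rw [if_neg (by omega), ih t (by omega), ih (t - 1) (by omega)]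
    rw [Function.iterate_succ_apply']
    have e1 : t - r = (t - (r + 1)) + 1 := by omega
    have e2 : t - 1 - r = t - (r + 1) := by omega
    rw [e1, e2]
    rfl

lemma exists_test (r n : ℕ) (b : ℕ → ℝ) :
    ∃ y : Fin n → ℝ, ∀ j < n, dpad^[r] (pad y) j = b j := by
  refine ⟨fun i => psum^[r] b i.1, fun j hj => ?_⟩
  have : dpad^[r] (pad fun i : Fin n => psum^[r] b i.1) j = dpad^[r] (psum^[r] b) j := by
    apply dpad_iter_congr
    intro t ht
    simp [pad, show t < n by omega]
  rw [this, dpad_iter_psum]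

lemma DD_eq_dpad (r n : ℕ) (α : Fin n → ℝ) (t : ℕ) :
    DD r α t = dpad^[r] (pad α) (t + r) := by
  rw [dpad_iter_ge r (t + r) _ (by omega), Nat.add_sub_cancel, DD]

lemma Dl1_eq (r n : ℕ) (hn : r + 1 ≤ n) (α : Fin n → ℝ) :
    Dl1 r α = ∑ j ∈ Finset.Ico r n, |dpad^[r] (pad α) j| := by
  rw [Dl1]
  rw [Finset.sum_Ico_eq_sum_range]
  exact Finset.sum_congr rfl fun t _ => by rw [DD_eq_dpad, Nat.add_comm]

lemma termwise (A u w : ℝ) (h1 : u ≠ 0 → A = Real.sign u) (h2 : u = 0 → -1 ≤ A ∧ A ≤ 1) :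
    A * (w - u) ≤ |w| - |u| := by
  rcases eq_or_ne u 0 with h | h
  · obtain ⟨ha, hb⟩ := h2 h
    subst h
    simp only [sub_zero, abs_zero]
    rcases le_or_gt 0 w with hw | hw
    · rw [abs_of_nonneg hw]; nlinarith
    · rw [abs_of_neg hw]; nlinarith
  · rw [h1 h]
    rcases lt_or_gt_of_ne h with hu | hu
    · rw [Real.sign_of_neg hu, abs_of_neg hu]
      rcases le_or_gt 0 w with hw | hw
      · rw [abs_of_nonneg hw]; nlinarith
      · rw [abs_of_neg hw]; nlinarith
    · rw [Real.sign_of_pos hu, abs_of_pos hu]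
      rcases le_or_gt 0 w with hw | hw
      · rw [abs_of_nonneg hw]; nlinarith
      · rw [abs_of_neg hw]; nlinarith

lemma inner_expand (r n : ℕ) (hr : 1 ≤ r) (v θ y : Fin n → ℝ) :
    ∑ i, v i * (y i - θ i)
      = ∑ j ∈ Finset.range n,
          Acoef r n v (j + 1) * (dpad^[r] (pad y) j - dpad^[r] (pad θ) j) := by
  have h0 : ∑ i, v i * (y i - θ i) = ∑ i, v i * y i - ∑ i, v i * θ i := by
    rw [← Finset.sum_sub_distrib]
    exact Finset.sum_congr rfl fun i _ => by ring
  rw [h0, key_identity r n hr v y, key_identity r n hr v θ, ← Finset.sum_sub_distrib]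
  exact Finset.sum_congr rfl fun j _ => by ring


/-- Proposition: characterization of the subdifferential of
`θ ↦ ‖D^{(r)} θ‖₁`.  All indices `j`, `i` are in the paper's 1-indexed convention,
so the paper entry `(D^{(r)}θ)_{j-r}` is `DD r θ (j - r - 1)` here. -/
theorem stmt4 (r n : ℕ) (hr : 1 ≤ r) (hn : r + 1 ≤ n) (θ v : Fin n → ℝ) :
    v ∈ subdiff (fun α => Dl1 r α) θ ↔
      ((∀ jj : ℕ, 1 ≤ jj → jj ≤ r → Acoef r n v jj = 0) ∧
        ∀ jj : ℕ, r < jj → jj ≤ n →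
          ((DD r θ (jj - r - 1) ≠ 0 → Acoef r n v jj = Real.sign (DD r θ (jj - r - 1))) ∧
            (DD r θ (jj - r - 1) = 0 → -1 ≤ Acoef r n v jj ∧ Acoef r n v jj ≤ 1))) := by
  simp only [subdiff, Set.mem_setOf_eq]
  set G : ℕ → ℝ := dpad^[r] (pad θ) with hG
  constructor
  · intro hv
    constructor
    · -- part (a)
      intro jj hjj1 hjjr
      set A := Acoef r n v jj with hA
      obtain ⟨y, hy⟩ := exists_test r n (fun j => G j + if j = jj - 1 then A else 0)
      have hjn : jj - 1 < n := by omega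
      have hsum : ∑ i, v i * (y i - θ i) = A * A := by
        rw [inner_expand r n hr]
        have : ∀ j ∈ Finset.range n,
            Acoef r n v (j + 1) * (dpad^[r] (pad y) j - G j)
              = if j = jj - 1 then Acoef r n v (j + 1) * A else 0 := by
          intro j hj
          rw [hy j (Finset.mem_range.mp hj)]
          split <;> ring
        rw [Finset.sum_congr rfl this, Finset.sum_ite_eq' (Finset.range n) (jj - 1)
          (fun j => Acoef r n v (j + 1) * A), if_pos (Finset.mem_range.mpr hjn)]
        have : jj - 1 + 1 = jj := by omega
        rw [this]
      have hDl : Dl1 r y = Dl1 r θ := by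
        rw [Dl1_eq r n hn, Dl1_eq r n hn]
        refine Finset.sum_congr rfl fun j hj => ?_
        simp only [Finset.mem_Ico] at hj
        rw [hy j hj.2, if_neg (by omega), add_zero]
      have := hv y
      rw [hsum, hDl] at this
      have hA2 : A * A ≤ 0 := by linarith
      exact mul_self_eq_zero.mp (le_antisymm hA2 (mul_self_nonneg A))
    · -- part (b)
      intro jj hrjj hjjn
      set A := Acoef r n v jj with hA
      set u := DD r θ (jj - r - 1) with hu
      have huG : u = G (jj - 1) := by
        have e : jj - r - 1 + r = jj - 1 := by omega
        rw [hu, DD_eq_dpad, e, hG]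
      have hmem : jj - 1 ∈ Finset.Ico r n := by
        simp only [Finset.mem_Ico]; omega
      have key : ∀ w : ℝ, A * (w - u) ≤ |w| - |u| := by
        intro w
        obtain ⟨y, hy⟩ := exists_test r n (fun j => G j + if j = jj - 1 then w - u else 0)
        have hjn : jj - 1 < n := by omega
        have hsum : ∑ i, v i * (y i - θ i) = A * (w - u) := by
          rw [inner_expand r n hr]
          have : ∀ j ∈ Finset.range n,
              Acoef r n v (j + 1) * (dpad^[r] (pad y) j - G j)
                = if j = jj - 1 then Acoef r n v (j + 1) * (w - u) else 0 := by
            intro j hj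
            rw [hy j (Finset.mem_range.mp hj)]
            split <;> ring
          rw [Finset.sum_congr rfl this, Finset.sum_ite_eq' (Finset.range n) (jj - 1)
            (fun j => Acoef r n v (j + 1) * (w - u)), if_pos (Finset.mem_range.mpr hjn)]
          have : jj - 1 + 1 = jj := by omega
          rw [this]
        have hDl : Dl1 r y = Dl1 r θ + (|w| - |u|) := by
          rw [Dl1_eq r n hn, Dl1_eq r n hn]
          have : ∀ j ∈ Finset.Ico r n,
              |dpad^[r] (pad y) j| = |G j| + (if j = jj - 1 then |w| - |u| else 0) := by
            intro j hj
            simp only [Finset.mem_Ico] at hj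
            rw [hy j hj.2]
            by_cases hje : j = jj - 1
            · rw [if_pos hje, if_pos hje, hje, ← huG]
              have e2 : u + (w - u) = w := by ring
              rw [e2]
              ring
            · rw [if_neg hje, if_neg hje, add_zero, add_zero]
          rw [Finset.sum_congr rfl this, Finset.sum_add_distrib,
            Finset.sum_ite_eq' (Finset.Ico r n) (jj - 1) (fun _ => |w| - |u|),
            if_pos hmem]
        have := hv y
        rw [hsum, hDl] at this
        linarith
      constructor
      · intro hune
        have k1 := key (2 * u)
        have k0 := key 0
        rw [abs_mul] at k1
        have habs2 : |(2:ℝ)| = 2 := by norm_num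
        rw [habs2] at k1
        simp only [abs_zero] at k0
        have hAu : A * u = |u| := by nlinarith
        rcases lt_trichotomy u 0 with h | h | h
        · rw [Real.sign_of_neg h]
          refine mul_right_cancel₀ hune ?_
          rw [hAu, abs_of_neg h]; ring
        · exact absurd h hune
        · rw [Real.sign_of_pos h]
          refine mul_right_cancel₀ hune ?_
          rw [hAu, abs_of_pos h]; ring
      · intro hu0
        have k1 := key 1
        have km := key (-1)
        rw [hu0] at k1 km
        simp only [sub_zero, abs_zero, abs_one, abs_neg] at k1 km
        constructor <;> nlinarith
  · rintro ⟨h1, h2⟩ y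
    rw [inner_expand r n hr]
    have hsplit : Finset.range n = Finset.Ico 0 r ∪ Finset.Ico r n := by
      rw [Finset.range_eq_Ico, Finset.Ico_union_Ico_eq_Ico (Nat.zero_le r) (by omega)]
    rw [hsplit, Finset.sum_union (by
      apply Finset.Ico_disjoint_Ico_consecutive)]
    have hz : ∑ j ∈ Finset.Ico 0 r,
        Acoef r n v (j + 1) * (dpad^[r] (pad y) j - G j) = 0 := by
      apply Finset.sum_eq_zero
      intro j hj
      simp only [Finset.mem_Ico] at hj
      rw [h1 (j + 1) (by omega) (by omega)]
      ring
    rw [hz, zero_add]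
    have hbound : ∑ j ∈ Finset.Ico r n,
        Acoef r n v (j + 1) * (dpad^[r] (pad y) j - G j)
          ≤ ∑ j ∈ Finset.Ico r n, (|dpad^[r] (pad y) j| - |G j|) := by
      apply Finset.sum_le_sum
      intro j hj
      simp only [Finset.mem_Ico] at hj
      have hGD : G j = DD r θ (j + 1 - r - 1) := by
        rw [DD_eq_dpad]
        congr 1
        omega
      obtain ⟨c1, c2⟩ := h2 (j + 1) (by omega) (by omega)
      rw [← hGD] at c1 c2
      exact termwise _ _ _ c1 c2
    have hfin : ∑ j ∈ Finset.Ico r n, (|dpad^[r] (pad y) j| - |G j|)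
        = Dl1 r y - Dl1 r θ := by
      rw [Finset.sum_sub_distrib, Dl1_eq r n hn, Dl1_eq r n hn]
    linarith [hbound, hfin.le]
end
end

section
/- Fix r ≥ 1 and n ≥ r. There exists a constant C_r > 0 depending only on r such that for every V > 0, every a ∈ ℝ and every t > 0, the fat shattering dimension of C_r(a, V) := {θ ∈ ℝ^n : a ≤ (D^{(r−1)}θ)_1 ≤ ⋯ ≤ (D^{(r−1)}θ)_{n−r+1} ≤ a + V} satisfies v(C_r(a, V), t) ≤ r + C_r · V^{1/r} n^{1−1/r} / t^{1/r}. -/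
open MeasureTheory ProbabilityTheory
open scoped BigOperators

noncomputable section

lemma dseq_iter_sub (s : ℕ) (u v : ℕ → ℝ) :
    dseq^[s] (fun x => u x - v x) = fun j => dseq^[s] u j - dseq^[s] v j := by
  induction s generalizing u v with
  | zero => rfl
  | succ s ih =>
    rw [Function.iterate_succ_apply, Function.iterate_succ_apply,
      Function.iterate_succ_apply (f := dseq) (x := v)]
    have : dseq (fun x => u x - v x) = fun x => dseq u x - dseq v x := by
      funext x; simp [dseq]; ring
    rw [this, ih]

lemma sum_Ico_dseq (f : ℕ → ℝ) {a b : ℕ} (h : a ≤ b) :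
    ∑ j ∈ Finset.Ico a b, dseq f j = f b - f a := by
  rw [Finset.sum_Ico_eq_sub _ h]
  simp only [dseq]
  rw [Finset.sum_range_sub, Finset.sum_range_sub]
  ring

lemma abs_sub_le_sum_abs_dseq (g : ℕ → ℝ) {u v : ℕ} (h : u ≤ v) :
    |g v - g u| ≤ ∑ j ∈ Finset.Ico u v, |dseq g j| := by
  rw [← sum_Ico_dseq g h]
  exact Finset.abs_sum_le_sum_abs _ _

lemma mono_of_succ {p : ℕ → ℕ} {q : ℕ} (h : ∀ k < q, p k < p (k + 1)) :
    ∀ i j, i ≤ j → j ≤ q → p i ≤ p j := by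
  intro i j hij hjq
  induction j with
  | zero => have : i = 0 := by omega
            rw [this]
  | succ j ih =>
    rcases Nat.eq_or_lt_of_le hij with rfl | hlt
    · exact le_rfl
    · have h1 : p i ≤ p j := ih (by omega) (by omega)
      have h2 : p j < p (j+1) := h j (by omega)
      omega

lemma alt_step (f : ℕ → ℝ) (c G : ℝ) (hc : 0 < c) (ε : ℝ)
    (q : ℕ) (hq : 1 ≤ q) (p : ℕ → ℕ)
    (hmono : ∀ k < q, p k < p (k + 1))
    (hwin : ∀ k ≤ q, (p k : ℝ) ≤ (p 0 : ℝ) + G)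
    (halt : ∀ k ≤ q, c ≤ ε * (-1) ^ k * f (p k)) :
    ∃ p' : ℕ → ℕ, (∀ k < q - 1, p' k < p' (k + 1)) ∧
      (∀ k ≤ q - 1, p k ≤ p' k ∧ p' k < p (k + 1)) ∧
      (∀ k ≤ q - 1, 2 * c / G ≤ (-ε) * (-1) ^ k * dseq f (p' k)) := by
  have hG : 0 < G := by
    have h1 := hwin 1 hq
    have h0 := hmono 0 hq
    have : (p 0 : ℝ) < p 1 := by exact_mod_cast h0
    linarith
  have key : ∀ k, ∃ j, k ≤ q - 1 →
      (p k ≤ j ∧ j < p (k + 1) ∧ 2 * c / G ≤ (-ε) * (-1) ^ k * dseq f j) := by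
    intro k
    by_cases hk : k ≤ q - 1
    · have hkq : k < q := by omega
      have hk1 : k + 1 ≤ q := by omega
      have hlt : p k < p (k + 1) := hmono k hkq
      set d : ℕ := p (k + 1) - p k with hd
      have hd1 : 1 ≤ d := by omega
      have hsum : ∑ j ∈ Finset.Ico (p k) (p (k + 1)), ε * (-1) ^ (k + 1) * dseq f j
          = ε * (-1) ^ (k + 1) * (f (p (k + 1)) - f (p k)) := by
        rw [← Finset.mul_sum]
        congr 1
        rw [Finset.sum_Ico_eq_sub _ (le_of_lt hlt)]
        simp only [dseq]
        rw [Finset.sum_range_sub, Finset.sum_range_sub]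
        ring
      have hbig : 2 * c ≤ ∑ j ∈ Finset.Ico (p k) (p (k + 1)), ε * (-1) ^ (k + 1) * dseq f j := by
        rw [hsum]
        have h1 := halt k (le_of_lt hkq)
        have h2 := halt (k + 1) hk1
        have : ε * (-1) ^ (k + 1) * (f (p (k + 1)) - f (p k))
            = ε * (-1) ^ (k + 1) * f (p (k + 1)) + ε * (-1) ^ k * f (p k) := by
          rw [pow_succ]; ring
        rw [this]; linarith
    -- exists element ≥ average
      have hcard : (Finset.Ico (p k) (p (k + 1))).card = d := by
        rw [Nat.card_Ico]
      have hne : (Finset.Ico (p k) (p (k + 1))).Nonempty := by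
        rw [Finset.nonempty_Ico]; exact hlt
      have havg : ∃ j ∈ Finset.Ico (p k) (p (k + 1)),
          2 * c / d ≤ ε * (-1) ^ (k + 1) * dseq f j := by
        by_contra hcon
        push_neg at hcon
        have : ∑ j ∈ Finset.Ico (p k) (p (k + 1)), ε * (-1) ^ (k + 1) * dseq f j
            < ∑ _j ∈ Finset.Ico (p k) (p (k + 1)), 2 * c / d := by
          exact Finset.sum_lt_sum_of_nonempty hne (fun j hj => hcon j hj)
        rw [Finset.sum_const, hcard, nsmul_eq_mul] at this
        have hdpos : (0:ℝ) < d := by exact_mod_cast hd1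
        rw [mul_div_cancel₀ _ (ne_of_gt hdpos)] at this
        linarith
      obtain ⟨j, hjmem, hjval⟩ := havg
      refine ⟨j, fun _ => ?_⟩
      rw [Finset.mem_Ico] at hjmem
      refine ⟨hjmem.1, hjmem.2, ?_⟩
      have hdG : (d : ℝ) ≤ G := by
        have w1 := hwin (k + 1) hk1
        have w0 : (p 0 : ℝ) ≤ p k := by
          exact_mod_cast mono_of_succ hmono 0 k (Nat.zero_le k) (le_of_lt hkq)
        have : (d : ℝ) = (p (k+1) : ℝ) - p k := by
          have : (p k : ℕ) ≤ p (k+1) := le_of_lt hlt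
          push_cast [hd, Nat.cast_sub this]; ring
        linarith
      have hdiv : 2 * c / G ≤ 2 * c / d := by
        apply div_le_div_of_nonneg_left (by linarith) (by positivity) hdG
      have : (-ε) * (-1) ^ k * dseq f j = ε * (-1) ^ (k + 1) * dseq f j := by
        rw [pow_succ]; ring
      rw [this]; linarith
    · exact ⟨0, fun h => absurd h hk⟩
  choose p' hp' using key
  refine ⟨p', ?_, ?_, ?_⟩
  · intro k hk
    have h1 := hp' k (by omega)
    have h2 := hp' (k + 1) (by omega)
    exact lt_of_lt_of_le h1.2.1 h2.1
  · intro k hk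
    exact ⟨(hp' k hk).1, (hp' k hk).2.1⟩
  · intro k hk
    exact (hp' k hk).2.2

lemma alt_iter (f : ℕ → ℝ) (c G : ℝ) (hc : 0 < c) (hG : 0 < G) (ε : ℝ)
    (hε : ε = 1 ∨ ε = -1) (q : ℕ) (p : ℕ → ℕ)
    (hmono : ∀ k < q, p k < p (k + 1))
    (hwin : ∀ k ≤ q, (p k : ℝ) ≤ (p 0 : ℝ) + G)
    (halt : ∀ k ≤ q, c ≤ ε * (-1) ^ k * f (p k)) :
    ∀ s, s < q → ∃ ε' : ℝ, (ε' = 1 ∨ ε' = -1) ∧ ∃ p' : ℕ → ℕ,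
      (∀ k < q - s, p' k < p' (k + 1)) ∧ (p 0 ≤ p' 0) ∧ (p' (q - s) + s ≤ p q) ∧
      (∀ k ≤ q - s, (p' k : ℝ) ≤ (p' 0 : ℝ) + G) ∧
      (∀ k ≤ q - s, c * (2 / G) ^ s ≤ ε' * (-1) ^ k * dseq^[s] f (p' k)) := by
  intro s
  induction s with
  | zero =>
    intro hs
    exact ⟨ε, hε, p, hmono, le_rfl, by simp, hwin, by simpa using halt⟩
  | succ s ih =>
    intro hs
    obtain ⟨ε', hε', p', hmono', h0', hlast', hwin', halt'⟩ := ih (by omega)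
    have hq1 : 1 ≤ q - s := by omega
    have hcpos : 0 < c * (2 / G) ^ s := by positivity
    obtain ⟨p'', hmono'', hbetween'', halt''⟩ :=
      alt_step (dseq^[s] f) (c * (2 / G) ^ s) G hcpos ε' (q - s) hq1 p' hmono' hwin' halt'
    refine ⟨-ε', by rcases hε' with h | h <;> simp [h], p'', ?_, ?_, ?_, ?_, ?_⟩
    · intro k hk
      exact hmono'' k (by omega)
    · exact le_trans h0' (hbetween'' 0 (by omega)).1
    · have h1 : p'' (q - s - 1) < p' (q - s - 1 + 1) := (hbetween'' (q - s - 1) le_rfl).2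
      have h2 : q - s - 1 + 1 = q - s := by omega
      rw [h2] at h1
      have : q - (s + 1) = q - s - 1 := by omega
      rw [this]
      omega
    · intro k hk
      have hk' : k ≤ q - s - 1 := by omega
      have h1 : (p'' k : ℕ) < p' (k + 1) := (hbetween'' k hk').2
      have h2 : (p' (k + 1) : ℝ) ≤ (p' 0 : ℝ) + G := hwin' (k + 1) (by omega)
      have h3 : (p' 0 : ℝ) ≤ p'' 0 := by
        exact_mod_cast le_trans le_rfl (Nat.cast_le.mpr (hbetween'' 0 (by omega)).1)
      have : (p'' k : ℝ) < p' (k + 1) := by exact_mod_cast h1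
      linarith
    · intro k hk
      have hk' : k ≤ q - s - 1 := by omega
      have h := halt'' k hk'
      have heq : c * (2 / G) ^ (s + 1) ≤ 2 * (c * (2 / G) ^ s) / G := by
        rw [pow_succ]
        apply le_of_eq
        field_simp
      have hfin : dseq (dseq^[s] f) (p'' k) = dseq^[s + 1] f (p'' k) := by
        rw [Function.iterate_succ_apply']
      rw [← hfin]
      linarith

lemma block_lemma (f : ℕ → ℝ) (r : ℕ) (hr : 1 ≤ r) (c G : ℝ) (hc : 0 < c) (hG : 0 < G)
    (ε : ℝ) (hε : ε = 1 ∨ ε = -1) (p : ℕ → ℕ)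
    (hmono : ∀ k < r, p k < p (k + 1))
    (hwin : ∀ k ≤ r, (p k : ℝ) ≤ (p 0 : ℝ) + G)
    (halt : ∀ k ≤ r, c ≤ ε * (-1) ^ k * f (p k)) :
    ∃ u v : ℕ, u < v ∧ p 0 ≤ u ∧ v + r ≤ p r + 1 ∧
      2 * c * (2 / G) ^ (r - 1) ≤ |dseq^[r - 1] f u - dseq^[r - 1] f v| := by
  obtain ⟨ε', hε', p', hmono', h0', hlast', hwin', halt'⟩ :=
    alt_iter f c G hc hG ε hε r p hmono hwin halt (r - 1) (by omega)
  have hq : r - (r - 1) = 1 := by omega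
  rw [hq] at hmono' hlast' hwin' halt'
  refine ⟨p' 0, p' 1, hmono' 0 (by omega), h0', by omega, ?_⟩
  have h0 := halt' 0 (by omega)
  have h1 := halt' 1 (by omega)
  simp only [pow_zero, pow_one] at h0 h1
  set x := dseq^[r-1] f (p' 0)
  set y := dseq^[r-1] f (p' 1)
  have hsum : 2 * (c * (2 / G) ^ (r - 1)) ≤ ε' * (x - y) := by nlinarith
  rcases hε' with h | h <;> rw [h] at hsum <;>
    [skip; skip] <;> cases abs_cases (x - y) <;> nlinarith [abs_nonneg (x - y)]

lemma chain_le {u v : ℕ → ℕ} {B : ℕ} (hle : ∀ b < B, u b ≤ v b)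
    (hch : ∀ b, b + 1 < B → v b ≤ u (b + 1)) :
    ∀ b b', b < b' → b' < B → v b ≤ u b' := by
  intro b b' hbb' hb'B
  induction b' with
  | zero => omega
  | succ b' ih =>
    rcases Nat.eq_or_lt_of_le (Nat.succ_le_of_lt hbb') with h | h
    · have hb : b = b' := by omega
      subst hb
      exact hch b hb'B
    · have h1 : v b ≤ u b' := ih (by omega) (by omega)
      have h2 : u b' ≤ v b' := hle b' (by omega)
      have h3 : v b' ≤ u (b' + 1) := hch b' hb'B
      omega

lemma sum_Ico_blocks_le (h : ℕ → ℝ) (M B : ℕ) (u v : ℕ → ℕ) (hnn : ∀ j, 0 ≤ h j)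
    (hle : ∀ b < B, u b ≤ v b) (hM : ∀ b < B, v b ≤ M)
    (hch : ∀ b, b + 1 < B → v b ≤ u (b + 1)) :
    ∑ b ∈ Finset.range B, ∑ j ∈ Finset.Ico (u b) (v b), h j ≤ ∑ j ∈ Finset.range M, h j := by
  have hdisj : (↑(Finset.range B) : Set ℕ).PairwiseDisjoint
      (fun b => Finset.Ico (u b) (v b)) := by
    have key : ∀ b b', b < b' → b' < B →
        Disjoint (Finset.Ico (u b) (v b)) (Finset.Ico (u b') (v b')) := by
      intro b b' hlt hb'
      rw [Finset.disjoint_left]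
      intro j hj hj'
      rw [Finset.mem_Ico] at hj hj'
      have := chain_le hle hch b b' hlt hb'
      omega
    intro b hb b' hb' hne
    simp only [Finset.coe_range, Set.mem_Iio] at hb hb'
    rcases Nat.lt_or_ge b b' with hlt | hge
    · exact key b b' hlt hb'
    · exact (key b' b (by omega) hb).symm
  rw [← Finset.sum_biUnion hdisj]
  apply Finset.sum_le_sum_of_subset_of_nonneg
  · intro j hj
    rw [Finset.mem_biUnion] at hj
    obtain ⟨b, hb, hjb⟩ := hj
    rw [Finset.mem_Ico] at hjb
    rw [Finset.mem_range] at hb ⊢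
    have := hM b hb
    omega
  · intro j _ _
    exact hnn j

-- core cardinality bound
lemma card_bound (r : ℕ) (hr : 1 ≤ r) (n : ℕ) (hn : r ≤ n) (V : ℝ) (hV : 0 < V)
    (a t : ℝ) (ht : 0 < t) (A : Finset (Fin n)) (hsh : fatShatters (CrMono r n a V) t A)
    (hmr : r < A.card) :
    t * ((A.card / (r + 1) : ℕ) : ℝ) ^ r ≤ 2 * V * (n : ℝ) ^ (r - 1) := by
  obtain ⟨h, hh⟩ := hsh
  set m := A.card with hm
  have hm1 : 1 ≤ m := by omega
  have hmn : m ≤ n := by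
    have := Finset.card_le_univ A
    simpa using this
  have hidx : ∀ k, min k (m - 1) < m := fun k =>
    Nat.lt_of_le_of_lt (Nat.min_le_right _ _) (by omega)
  set emb := A.orderEmbOfFin rfl with hemb
  set P : ℕ → ℕ := fun k => (emb ⟨min k (m - 1), hidx k⟩ : ℕ) with hP
  have hPlt : ∀ k, P k < n := fun k => (emb _).2
  have hPmono : Monotone P := by
    intro k k' hkk'
    have : (⟨min k (m-1), hidx k⟩ : Fin m) ≤ ⟨min k' (m-1), hidx k'⟩ := by
      rw [Fin.mk_le_mk]
      exact min_le_min hkk' le_rfl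
    exact emb.monotone this
  have hPstrict : ∀ k k', k < k' → k' ≤ m - 1 → P k < P k' := by
    intro k k' hlt hle
    have : (⟨min k (m-1), hidx k⟩ : Fin m) < ⟨min k' (m-1), hidx k'⟩ := by
      rw [Fin.mk_lt_mk]
      omega
    exact emb.strictMono this
  set S : Finset (Fin n) :=
    Finset.image (fun j : Fin m => emb j) (Finset.univ.filter (fun j : Fin m => j.1 % 2 = 0))
      with hS
  have hSA : S ⊆ A := by
    intro i hi
    rw [hS, Finset.mem_image] at hi
    obtain ⟨j, _, rfl⟩ := hi
    exact Finset.orderEmbOfFin_mem A rfl j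
  obtain ⟨θ, hθK, hθ1, hθ2⟩ := hh S hSA
  obtain ⟨θ', hθ'K, hθ'1, hθ'2⟩ := hh (A \ S) (Finset.sdiff_subset)
  set f : ℕ → ℝ := fun j => pad θ' j - pad θ j with hf
  -- master alternation
  have hAlt : ∀ k ≤ m - 1, t ≤ (-1 : ℝ) ^ k * f (P k) := by
    intro k hk
    have hkm : k < m := by omega
    have hmin : min k (m - 1) = k := by omega
    set i : Fin n := emb ⟨k, hkm⟩ with hi
    have harg : (⟨min k (m - 1), hidx k⟩ : Fin m) = ⟨k, hkm⟩ := by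
      apply Fin.ext
      simpa using hmin
    have hPk : P k = (i : ℕ) := by
      rw [hP, hi]
      simp only
      rw [harg]
    have hiA : i ∈ A := Finset.orderEmbOfFin_mem A rfl _
    have hfin : (⟨P k, hPlt k⟩ : Fin n) = i := Fin.ext hPk
    have hpadθ : pad θ (P k) = θ i := by rw [pad, dif_pos (hPlt k), hfin]
    have hpadθ' : pad θ' (P k) = θ' i := by rw [pad, dif_pos (hPlt k), hfin]
    have hfPk : f (P k) = θ' i - θ i := by rw [hf]; simp only; rw [hpadθ, hpadθ']
    by_cases he : k % 2 = 0
    · have hiS : i ∈ S := by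
        rw [hS, Finset.mem_image]
        exact ⟨⟨k, hkm⟩, by simp [he], rfl⟩
      have h1 : θ i ≤ h i := hθ1 i hiS
      have h2 : h i + t ≤ θ' i := by
        apply hθ'2 i hiA
        rw [Finset.mem_sdiff]
        exact fun hc => hc.2 hiS
      have hpow : (-1 : ℝ) ^ k = 1 := Even.neg_one_pow (Nat.even_iff.mpr he)
      rw [hpow, one_mul, hfPk]
      linarith
    · have hiS : i ∉ S := by
        intro hiS
        rw [hS, Finset.mem_image] at hiS
        obtain ⟨j, hj, hji⟩ := hiS
        rw [Finset.mem_filter] at hj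
        have : j = ⟨k, hkm⟩ := emb.injective (hji.trans hi)
        rw [this] at hj
        exact he hj.2
      have h1 : θ' i ≤ h i := hθ'1 i (Finset.mem_sdiff.mpr ⟨hiA, hiS⟩)
      have h2 : h i + t ≤ θ i := hθ2 i hiA hiS
      have hpow : (-1 : ℝ) ^ k = -1 :=
        Odd.neg_one_pow (Nat.odd_iff.mpr (by omega))
      rw [hpow, hfPk]
      linarith
  -- unpack membership in CrMono
  obtain ⟨hθa, hθmono, hθb⟩ := hθK
  obtain ⟨hθ'a, hθ'mono, hθ'b⟩ := hθ'K
  set g : ℕ → ℝ := dseq^[r-1] f with hg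
  have hgdef : ∀ j, g j = DD (r-1) θ' j - DD (r-1) θ j := by
    intro j
    rw [hg, hf]
    have := congrFun (dseq_iter_sub (r-1) (pad θ') (pad θ)) j
    simpa [DD] using this
  -- total variation bound
  have hTV : ∑ j ∈ Finset.range (n - r), |dseq g j| ≤ 2 * V := by
    have hpt : ∀ j ∈ Finset.range (n - r), |dseq g j| ≤
        (DD (r-1) θ' (j+1) - DD (r-1) θ' j) + (DD (r-1) θ (j+1) - DD (r-1) θ j) := by
      intro j hj
      rw [Finset.mem_range] at hj
      have m1 : DD (r-1) θ j ≤ DD (r-1) θ (j+1) := hθmono j (by omega)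
      have m2 : DD (r-1) θ' j ≤ DD (r-1) θ' (j+1) := hθ'mono j (by omega)
      have hde : dseq g j = (DD (r-1) θ' (j+1) - DD (r-1) θ' j)
          - (DD (r-1) θ (j+1) - DD (r-1) θ j) := by
        show g (j+1) - g j = _
        rw [hgdef, hgdef]
        ring
      rw [hde]
      rcases abs_cases ((DD (r-1) θ' (j+1) - DD (r-1) θ' j)
          - (DD (r-1) θ (j+1) - DD (r-1) θ j)) with ⟨heq, _⟩ | ⟨heq, _⟩ <;>
        rw [heq] <;> linarith
    calc ∑ j ∈ Finset.range (n - r), |dseq g j|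
        ≤ ∑ j ∈ Finset.range (n - r), ((DD (r-1) θ' (j+1) - DD (r-1) θ' j)
            + (DD (r-1) θ (j+1) - DD (r-1) θ j)) := Finset.sum_le_sum hpt
      _ = (DD (r-1) θ' (n-r) - DD (r-1) θ' 0) + (DD (r-1) θ (n-r) - DD (r-1) θ 0) := by
          rw [Finset.sum_add_distrib, Finset.sum_range_sub (fun j => DD (r-1) θ' j),
            Finset.sum_range_sub (fun j => DD (r-1) θ j)]
      _ ≤ 2 * V := by linarith
  -- blocks
  set B : ℕ := m / (r + 1) with hB
  have hB1 : 1 ≤ B := by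
    rw [hB]
    rw [Nat.le_div_iff_mul_le (by omega)]
    omega
  have hmulB : B * (r + 1) ≤ m := by
    rw [hB]
    exact Nat.div_mul_le_self m (r + 1)
  have hidxB : ∀ b < B, b * (r + 1) + r + 1 ≤ m := by
    intro b hb
    have h1 : (b + 1) * (r + 1) ≤ B * (r + 1) := Nat.mul_le_mul_right _ (by omega)
    have h2 : (b + 1) * (r + 1) = b * (r + 1) + (r + 1) := by ring
    omega
  set Gb : ℕ → ℝ := fun b => (P (b * (r+1) + r) : ℝ) - (P (b * (r+1)) : ℝ) with hGb
  have hGpos : ∀ b < B, 0 < Gb b := by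
    intro b hb
    have hlt := hPstrict (b * (r+1)) (b * (r+1) + r) (by omega) (by have := hidxB b hb; omega)
    have hltR : (P (b*(r+1)) : ℝ) < (P (b*(r+1)+r) : ℝ) := by exact_mod_cast hlt
    rw [hGb]
    simp only
    linarith
  have hblkex : ∀ b, ∃ u v : ℕ, b < B → (u < v ∧ P (b * (r+1)) ≤ u ∧
      v + r ≤ P (b * (r+1) + r) + 1 ∧ 2 * t * (2 / Gb b) ^ (r - 1) ≤ |g u - g v|) := by
    intro b
    by_cases hb : b < B
    · have hG := hGpos b hb
      have hε : ((-1 : ℝ) ^ (b * (r+1)) = 1 ∨ (-1 : ℝ) ^ (b * (r+1)) = -1) := by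
        rcases Nat.even_or_odd (b * (r+1)) with he | ho
        · exact Or.inl (Even.neg_one_pow he)
        · exact Or.inr (Odd.neg_one_pow ho)
      obtain ⟨u, v, h1, h2, h3, h4⟩ := block_lemma f r hr t (Gb b) ht hG
        ((-1 : ℝ) ^ (b * (r+1))) hε (fun k => P (b * (r+1) + k))
        (by
          intro k hk
          exact hPstrict _ _ (by omega) (by have := hidxB b hb; omega))
        (by
          intro k hk
          have hmono' : P (b * (r+1) + k) ≤ P (b * (r+1) + r) := hPmono (by omega)
          have : (P (b * (r+1) + k) : ℝ) ≤ P (b * (r+1) + r) := by exact_mod_cast hmono'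
          rw [hGb]
          simp only
          have h0 : b * (r+1) + 0 = b * (r+1) := by omega
          rw [h0]
          linarith)
        (by
          intro k hk
          have := hAlt (b * (r+1) + k) (by have := hidxB b hb; omega)
          rw [← pow_add]
          exact this)
      exact ⟨u, v, fun _ => ⟨h1, by simpa using h2, h3, h4⟩⟩
    · exact ⟨0, 0, fun h => absurd h hb⟩
  choose u v hblk using hblkex
  -- main sum bound
  have hsum1 : ∑ b ∈ Finset.range B, 2 * t * (2 / Gb b) ^ (r - 1) ≤ 2 * V := by
    have step1 : ∀ b ∈ Finset.range B, 2 * t * (2 / Gb b) ^ (r - 1) ≤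
        ∑ j ∈ Finset.Ico (u b) (v b), |dseq g j| := by
      intro b hb
      rw [Finset.mem_range] at hb
      obtain ⟨h1, h2, h3, h4⟩ := hblk b hb
      calc 2 * t * (2 / Gb b) ^ (r - 1) ≤ |g (u b) - g (v b)| := h4
        _ = |g (v b) - g (u b)| := abs_sub_comm _ _
        _ ≤ ∑ j ∈ Finset.Ico (u b) (v b), |dseq g j| :=
            abs_sub_le_sum_abs_dseq g (le_of_lt h1)
    calc ∑ b ∈ Finset.range B, 2 * t * (2 / Gb b) ^ (r - 1)
        ≤ ∑ b ∈ Finset.range B, ∑ j ∈ Finset.Ico (u b) (v b), |dseq g j| :=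
          Finset.sum_le_sum step1
      _ ≤ ∑ j ∈ Finset.range (n - r), |dseq g j| := by
          apply sum_Ico_blocks_le (fun j => |dseq g j|) (n - r) B u v (fun j => abs_nonneg _)
          · intro b hb
            exact le_of_lt (hblk b hb).1
          · intro b hb
            have h3 := (hblk b hb).2.2.1
            have := hPlt (b * (r+1) + r)
            omega
          · intro b hb
            have h3 := (hblk b (by omega)).2.2.1
            have h5 : P (b * (r+1) + r) < P ((b+1) * (r+1)) := by
              apply hPstrict _ _ (by nlinarith) (by have := hidxB (b+1) hb; omega)
            have h6 := (hblk (b+1) (by omega)).2.1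
            omega
      _ ≤ 2 * V := hTV
  -- sum of block widths
  have hsum2 : ∑ b ∈ Finset.range B, Gb b ≤ (n : ℝ) := by
    have hGbsum : ∀ b ∈ Finset.range B, Gb b =
        ∑ j ∈ Finset.Ico (b * (r+1)) (b * (r+1) + r), dseq (fun j => (P j : ℝ)) j := by
      intro b hb
      rw [sum_Ico_dseq _ (by omega)]
    calc ∑ b ∈ Finset.range B, Gb b
        = ∑ b ∈ Finset.range B, ∑ j ∈ Finset.Ico (b * (r+1)) (b * (r+1) + r),
            dseq (fun j => (P j : ℝ)) j := Finset.sum_congr rfl hGbsum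
      _ ≤ ∑ j ∈ Finset.range (m - 1), dseq (fun j => (P j : ℝ)) j := by
          apply sum_Ico_blocks_le
          · intro j
            rw [dseq]
            simp only [sub_nonneg]
            exact_mod_cast hPmono (by omega)
          · intro b hb
            omega
          · intro b hb
            have := hidxB b hb
            omega
          · intro b hb
            have h2 : (b + 1) * (r + 1) = b * (r + 1) + (r + 1) := by ring
            omega
      _ = (P (m-1) : ℝ) - (P 0 : ℝ) := by
          simp only [dseq]
          rw [Finset.sum_range_sub (fun j => (P j : ℝ))]
      _ ≤ (n : ℝ) := by
          have h1 := hPlt (m - 1)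
          have h2 : (P (m-1) : ℝ) ≤ n := by exact_mod_cast le_of_lt h1
          have h3 : (0 : ℝ) ≤ (P 0 : ℝ) := Nat.cast_nonneg _
          linarith
  -- pigeonhole
  have hnpos : 0 < n := by omega
  have hnR : (0:ℝ) < n := by exact_mod_cast hnpos
  have hBR : (0:ℝ) < B := by exact_mod_cast hB1
  set W : ℝ := 2 * n / B with hW
  have hWpos : 0 < W := by rw [hW]; positivity
  set T := (Finset.range B).filter (fun b => Gb b ≤ W) with hT
  set T' := (Finset.range B).filter (fun b => ¬ Gb b ≤ W) with hT'
  have hT'bound : (T'.card : ℝ) * W ≤ n := by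
    calc (T'.card : ℝ) * W = ∑ _b ∈ T', W := by rw [Finset.sum_const, nsmul_eq_mul]
      _ ≤ ∑ b ∈ T', Gb b := Finset.sum_le_sum (fun b hb => by
          rw [hT', Finset.mem_filter] at hb
          linarith [hb.2])
      _ ≤ ∑ b ∈ Finset.range B, Gb b := Finset.sum_le_sum_of_subset_of_nonneg
          (Finset.filter_subset _ _)
          (fun b hb _ => le_of_lt (hGpos b (Finset.mem_range.mp hb)))
      _ ≤ n := hsum2
  have hT'le : (T'.card : ℝ) ≤ (B:ℝ) / 2 := by
    have h1 : (T'.card : ℝ) ≤ n / W := (le_div_iff₀ hWpos).mpr hT'bound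
    have h2 : (n:ℝ) / W = (B:ℝ) / 2 := by
      rw [hW]
      field_simp
    rwa [h2] at h1
  have hTcard : (B : ℝ) / 2 ≤ T.card := by
    have hsplit : T.card + T'.card = B := by
      rw [hT, hT']
      rw [Finset.card_filter_add_card_filter_not]
      exact Finset.card_range B
    have hc : (T.card : ℝ) + T'.card = B := by exact_mod_cast hsplit
    linarith
  have hsum3 : (T.card : ℝ) * (2 * t * (2 / W) ^ (r-1)) ≤ 2 * V := by
    calc (T.card:ℝ) * (2 * t * (2/W)^(r-1)) = ∑ _b ∈ T, 2 * t * (2/W)^(r-1) := by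
          rw [Finset.sum_const, nsmul_eq_mul]
      _ ≤ ∑ b ∈ T, 2 * t * (2 / Gb b)^(r-1) := Finset.sum_le_sum (fun b hb => by
          rw [hT, Finset.mem_filter, Finset.mem_range] at hb
          have hG := hGpos b hb.1
          have hdd : 2 / W ≤ 2 / Gb b :=
            div_le_div_of_nonneg_left (by norm_num) hG hb.2
          have hp := pow_le_pow_left₀ (by positivity : (0:ℝ) ≤ 2/W) hdd (r-1)
          exact mul_le_mul_of_nonneg_left hp (by positivity))
      _ ≤ ∑ b ∈ Finset.range B, 2 * t * (2/Gb b)^(r-1) :=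
          Finset.sum_le_sum_of_subset_of_nonneg (Finset.filter_subset _ _)
          (fun b hb _ => by
            have hG := hGpos b (Finset.mem_range.mp hb)
            positivity)
      _ ≤ 2*V := hsum1
  have h2W : 2 / W = (B:ℝ) / n := by
    rw [hW]
    rw [div_div_eq_mul_div, div_eq_div_iff (by positivity) (ne_of_gt hnR)]
    ring
  have hfin1 : (B:ℝ)/2 * (2 * t * ((B:ℝ)/n)^(r-1)) ≤ 2 * V := by
    rw [← h2W]
    calc (B:ℝ)/2 * (2*t*(2/W)^(r-1)) ≤ (T.card:ℝ) * (2*t*(2/W)^(r-1)) :=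
        mul_le_mul_of_nonneg_right hTcard (by positivity)
      _ ≤ 2*V := hsum3
  have hexp : (B:ℝ)/2 * (2*t*((B:ℝ)/n)^(r-1)) = t * (B:ℝ)^r / (n:ℝ)^(r-1) := by
    rw [div_pow]
    have hBr : (B:ℝ)^r = B * (B:ℝ)^(r-1) := by
      conv_lhs => rw [show r = 1 + (r-1) by omega]
      rw [pow_add, pow_one]
    rw [hBr]
    field_simp
  rw [hexp] at hfin1
  rw [div_le_iff₀ (by positivity)] at hfin1
  have hBeq : ((A.card / (r + 1) : ℕ) : ℝ) = (B:ℝ) := by rw [hB, hm]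
  rw [hBeq]
  linarith [hfin1]

/-- Lemma: fat shattering dimension bound for `C_r(a, V)`. -/
theorem stmt16 (r : ℕ) (hr : 1 ≤ r) :
    ∃ C : ℝ, 0 < C ∧
      ∀ (n : ℕ), r ≤ n → ∀ V : ℝ, 0 < V → ∀ a : ℝ, ∀ t : ℝ, 0 < t →
        (fatDim (CrMono r n a V) t : ℝ) ≤
          (r : ℝ) + C * V ^ ((1 : ℝ) / (r : ℝ)) * (n : ℝ) ^ (1 - (1 : ℝ) / (r : ℝ)) /
            t ^ ((1 : ℝ) / (r : ℝ)) := by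

  refine ⟨2 * ((r : ℝ) + 1), by positivity, ?_⟩
  intro n hn V hV a t ht
  have hrR : (0:ℝ) < r := by exact_mod_cast hr
  have hnpos : 0 < n := by omega
  have hnR : (0:ℝ) < (n:ℝ) := by exact_mod_cast hnpos
  set X : ℝ := V ^ ((1:ℝ)/(r:ℝ)) * (n:ℝ) ^ (1 - (1:ℝ)/(r:ℝ)) / t ^ ((1:ℝ)/(r:ℝ)) with hX
  have hXnn : 0 ≤ X := by rw [hX]; positivity
  have hgoal : (r:ℝ) + 2*((r:ℝ)+1) * X =
      (r : ℝ) + 2 * ((r : ℝ) + 1) * V ^ ((1 : ℝ) / (r : ℝ)) *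
        (n : ℝ) ^ (1 - (1 : ℝ) / (r : ℝ)) / t ^ ((1 : ℝ) / (r : ℝ)) := by
    rw [hX]; ring
  rw [← hgoal]
  have hmain : ∀ mA ∈ {m : ℕ | ∃ A : Finset (Fin n), A.card = m ∧
      fatShatters (CrMono r n a V) t A}, (mA : ℝ) ≤ (r:ℝ) + 2*((r:ℝ)+1) * X := by
    intro mA hmA
    obtain ⟨A, hA, hsh⟩ := hmA
    subst hA
    by_cases hcase : A.card ≤ r
    · have h1 : (A.card : ℝ) ≤ r := by exact_mod_cast hcase
      nlinarith [hXnn, hrR]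
    · push_neg at hcase
      have hkey := card_bound r hr n hn V hV a t ht A hsh hcase
      set B : ℕ := A.card / (r+1) with hB
      have hBR : (0:ℝ) ≤ B := Nat.cast_nonneg _
      have hBle : (B:ℝ) ≤ 2 * X := by
        have h1 : (B:ℝ)^(r:ℕ) ≤ 2*V*(n:ℝ)^((r-1:ℕ))/t := by
          rw [le_div_iff₀ ht]
          calc (B:ℝ)^r * t = t * (B:ℝ)^r := by ring
            _ ≤ 2*V*(n:ℝ)^(r-1) := hkey
        have h2 := Real.rpow_le_rpow (by positivity) h1
          (by positivity : (0:ℝ) ≤ 1/(r:ℝ))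
        have h3 : ((B:ℝ)^(r:ℕ)) ^ ((1:ℝ)/(r:ℝ)) = (B:ℝ) := by
          rw [← Real.rpow_natCast (B:ℝ) r, ← Real.rpow_mul hBR]
          rw [mul_one_div, div_self (ne_of_gt hrR), Real.rpow_one]
        have h4 : (2*V*(n:ℝ)^((r-1:ℕ))/t) ^ ((1:ℝ)/(r:ℝ)) ≤ 2 * X := by
          rw [Real.div_rpow (by positivity) (le_of_lt ht)]
          rw [Real.mul_rpow (by positivity) (by positivity)]
          rw [Real.mul_rpow (by norm_num) (le_of_lt hV)]
          have hnr : ((n:ℝ)^((r-1:ℕ))) ^ ((1:ℝ)/(r:ℝ)) = (n:ℝ) ^ (1 - (1:ℝ)/(r:ℝ)) := by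
            rw [← Real.rpow_natCast (n:ℝ) (r-1), ← Real.rpow_mul (le_of_lt hnR)]
            congr 1
            rw [Nat.cast_sub hr]
            push_cast
            field_simp
          rw [hnr]
          have h2r : (2:ℝ) ^ ((1:ℝ)/(r:ℝ)) ≤ 2 := by
            calc (2:ℝ)^((1:ℝ)/(r:ℝ)) ≤ (2:ℝ)^(1:ℝ) := by
                  apply Real.rpow_le_rpow_of_exponent_le one_le_two
                  rw [div_le_one hrR]
                  exact_mod_cast hr
              _ = 2 := Real.rpow_one 2
          rw [hX]
          have hrest : 0 ≤ V ^ ((1:ℝ)/(r:ℝ)) * (n:ℝ) ^ (1 - (1:ℝ)/(r:ℝ)) /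
              t ^ ((1:ℝ)/(r:ℝ)) := by positivity
          calc (2:ℝ)^((1:ℝ)/(r:ℝ)) * V^((1:ℝ)/(r:ℝ)) * (n:ℝ)^(1-(1:ℝ)/(r:ℝ)) /
                t^((1:ℝ)/(r:ℝ))
              = (2:ℝ)^((1:ℝ)/(r:ℝ)) * (V^((1:ℝ)/(r:ℝ)) * (n:ℝ)^(1-(1:ℝ)/(r:ℝ)) /
                t^((1:ℝ)/(r:ℝ))) := by ring
            _ ≤ 2 * (V^((1:ℝ)/(r:ℝ)) * (n:ℝ)^(1-(1:ℝ)/(r:ℝ)) / t^((1:ℝ)/(r:ℝ))) :=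
                mul_le_mul_of_nonneg_right h2r hrest
        calc (B:ℝ) = ((B:ℝ)^(r:ℕ))^((1:ℝ)/(r:ℝ)) := h3.symm
          _ ≤ (2*V*(n:ℝ)^((r-1:ℕ))/t)^((1:ℝ)/(r:ℝ)) := h2
          _ ≤ 2*X := h4
      have hmB : A.card ≤ (r+1) * B + r := by
        have hd : (r+1) * B + A.card % (r+1) = A.card := Nat.div_add_mod A.card (r+1)
        have hm : A.card % (r+1) < r + 1 := Nat.mod_lt A.card (by omega)
        generalize hq : (r+1) * B = q at hd ⊢
        generalize hmv : A.card % (r+1) = mv at hd hm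
        omega
      have hmBR : (A.card : ℝ) ≤ ((r:ℝ)+1) * B + r := by exact_mod_cast hmB
      calc (A.card:ℝ) ≤ ((r:ℝ)+1)*(B:ℝ) + r := hmBR
        _ ≤ ((r:ℝ)+1)*(2*X) + r := by nlinarith [hBle, hrR]
        _ = (r:ℝ) + 2*((r:ℝ)+1)*X := by ring
  rw [fatDim]
  by_cases hne : {m : ℕ | ∃ A : Finset (Fin n), A.card = m ∧
      fatShatters (CrMono r n a V) t A}.Nonempty
  · have hbdd : BddAbove {m : ℕ | ∃ A : Finset (Fin n), A.card = m ∧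
        fatShatters (CrMono r n a V) t A} := by
      refine ⟨n, ?_⟩
      intro mm hmm
      obtain ⟨A, hA, _⟩ := hmm
      rw [← hA]
      simpa using Finset.card_le_univ A
    exact hmain _ (Nat.sSup_mem hne hbdd)
  · rw [Set.not_nonempty_iff_eq_empty] at hne
    rw [hne, csSup_empty]
    simp only [Nat.bot_eq_zero, Nat.cast_zero]
    nlinarith [hXnn, hrR]
end
end

section
/- Fix r ≥ 1, n ≥ r+1, V > 0, and let θ ∈ K^{(r)}(V) satisfy V^{(r)}(θ) = V. Let 2 ≤ j_1 < ⋯ < j_k ≤ n−r+1 be all the r-th order knots of θ with signs 𝔯_1,…,𝔯_k ∈ {−1,1}, and set j_0 = 1 and j_{k+1} = n−r+2. Then the tangent cone of K^{(r)}(V) at θ equals T_{K^{(r)}(V)}(θ) = { α ∈ ℝ^n : Σ_{i=0}^{k} V_{j_i, j_{i+1}−1}(D^{(r−1)}α) ≤ Σ_{i=1}^k 𝔯_i · ((D^{(r−1)}α)_{j_i−1} − (D^{(r−1)}α)_{j_i}) }. -/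
open MeasureTheory ProbabilityTheory
open scoped BigOperators

noncomputable section

lemma dseq_iter_lin (m : ℕ) (a b : ℝ) (f g : ℕ → ℝ) :
    dseq^[m] (fun t => a * f t + b * g t) = fun t => a * dseq^[m] f t + b * dseq^[m] g t := by
  induction m generalizing f g with
  | zero => simp
  | succ m ih =>
    rw [Function.iterate_succ_apply, Function.iterate_succ_apply, Function.iterate_succ_apply]
    have h : dseq (fun t => a * f t + b * g t) = fun t => a * dseq f t + b * dseq g t := by
      funext t; simp [dseq]; ring
    rw [h, ih]

lemma pad_lin {n : ℕ} (a b : ℝ) (x y : Fin n → ℝ) :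
    pad (a • x + b • y) = fun t => a * pad x t + b * pad y t := by
  funext t
  by_cases h : t < n <;> simp [pad, h]

lemma DD_lin (m : ℕ) {n : ℕ} (a b : ℝ) (x y : Fin n → ℝ) (t : ℕ) :
    DD m (a • x + b • y) t = a * DD m x t + b * DD m y t := by
  rw [DD, pad_lin, dseq_iter_lin]; rfl

lemma DD_sub (m : ℕ) {n : ℕ} (x y : Fin n → ℝ) (t : ℕ) :
    DD m (x - y) t = DD m x t - DD m y t := by
  have h : x - y = (1:ℝ) • x + (-1:ℝ) • y := by
    funext i; simp [Pi.sub_apply]; ring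
  rw [h, DD_lin]; ring

lemma DD_add_smul (m : ℕ) {n : ℕ} (x : Fin n → ℝ) (c : ℝ) (y : Fin n → ℝ) (t : ℕ) :
    DD m (x + c • y) t = DD m x t + c * DD m y t := by
  have h : x + c • y = (1:ℝ) • x + c • y := by rw [one_smul]
  rw [h, DD_lin]; ring

lemma DD_smul (m : ℕ) {n : ℕ} (c : ℝ) (y : Fin n → ℝ) (t : ℕ) :
    DD m (c • y) t = c * DD m y t := by
  have h := DD_lin m c 0 y y t
  simpa using h

lemma DD_succ (m : ℕ) {n : ℕ} (x : Fin n → ℝ) (t : ℕ) :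
    DD (m+1) x t = DD m x (t+1) - DD m x t := by
  rw [DD, Function.iterate_succ_apply']
  rfl

lemma DD_cont (m : ℕ) {n : ℕ} (t : ℕ) : Continuous fun x : Fin n → ℝ => DD m x t := by
  induction m generalizing t with
  | zero =>
    by_cases h : t < n
    · simpa [DD, pad, h] using continuous_apply (⟨t, h⟩ : Fin n)
    · simpa [DD, pad, h] using continuous_const
  | succ m ih =>
    have h : (fun x : Fin n → ℝ => DD (m+1) x t) = fun x => DD m x (t+1) - DD m x t := by
      funext x; rw [DD_succ]
    rw [h]; exact (ih (t+1)).sub (ih t)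

lemma abs_add_sign_le (a b : ℝ) (ha : a ≠ 0) :
    |a| + (if 0 < a then 1 else -1) * b ≤ |a + b| := by
  have h1 := le_abs_self (a + b)
  have h2 := neg_abs_le (a + b)
  rcases ha.lt_or_gt with h | h
  · rw [abs_of_neg h, if_neg (not_lt.mpr h.le)]; linarith
  · rw [abs_of_pos h, if_pos h]; linarith

lemma abs_add_sign_eq (a b : ℝ) (ha : a ≠ 0) (hb : |b| ≤ |a|) :
    |a + b| = |a| + (if 0 < a then 1 else -1) * b := by
  have hb1 := (abs_le.mp hb).1
  have hb2 := (abs_le.mp hb).2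
  rcases ha.lt_or_gt with h | h
  · rw [abs_of_neg h] at hb1 hb2 ⊢
    rw [if_neg (not_lt.mpr h.le), abs_of_nonpos (by linarith)]; ring
  · rw [abs_of_pos h] at hb1 hb2 ⊢
    rw [if_pos h, abs_of_nonneg (by linarith)]; ring

lemma q_lower (k : ℕ) (q : ℕ → ℕ) (hq0 : q 0 = 1) (hmono : ∀ i ≤ k, q i < q (i+1)) :
    ∀ m ≤ k+1, m + 1 ≤ q m := by
  intro m
  induction m with
  | zero => intro _; omega
  | succ m ih =>
    intro h
    have h1 := hmono m (by omega)
    have h2 := ih (by omega)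
    omega

lemma sum_partition (g : ℕ → ℝ) (k : ℕ) (q : ℕ → ℕ)
    (hq0 : q 0 = 1) (hmono : ∀ i ≤ k, q i < q (i+1)) :
    ∑ t ∈ Finset.range (q (k+1) - 2), g t =
      (∑ i ∈ Finset.range (k+1), ∑ t ∈ Finset.Ico (q i - 1) (q (i+1) - 2), g t)
        + ∑ i ∈ Finset.range k, g (q (i+1) - 2) := by
  induction k with
  | zero =>
    rw [Finset.sum_range_one, Finset.sum_range_zero, add_zero, Finset.range_eq_Ico, hq0]
  | succ k ih =>
    have hm' : ∀ i ≤ k, q i < q (i+1) := fun i hi => hmono i (by omega)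
    have h1 := q_lower (k+1) q hq0 hmono (k+1) (by omega)
    have h2 := hmono (k+1) le_rfl
    rw [Finset.range_eq_Ico,
      ← Finset.sum_Ico_consecutive g (Nat.zero_le (q (k+1) - 2)) (by omega : q (k+1) - 2 ≤ q (k+1+1) - 2),
      ← Finset.range_eq_Ico, ih hm',
      Finset.sum_eq_sum_Ico_succ_bot (by omega : q (k+1) - 2 < q (k+1+1) - 2) g,
      show q (k+1) - 2 + 1 = q (k+1) - 1 by omega,
      Finset.sum_range_succ _ (k+1), Finset.sum_range_succ _ k,
      Finset.sum_range_succ (fun x => g (q (x+1) - 2)) k]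
    ring

/-- Lemma: characterization of the tangent cone of `K^{(r)}(V)` at a point
`θ` with `V^{(r)}(θ) = V`.  All knot indices are in paper (1-indexed) convention, so the
paper entry `(D^{(r-1)}α)_m` is `DD (r-1) α (m-1)` here, and the segment variations are
`V_{j_i, j_{i+1}-1}(D^{(r-1)}α) = Vab (DD (r-1) α) (jext i) (jext (i+1) - 1)` with
`jext 0 = 1` and `jext (k+1) = n - r + 2`. -/
theorem stmt17 (r n : ℕ) (hr : 1 ≤ r) (hn : r + 1 ≤ n) (V : ℝ) (hV : 0 < V)
    (θ : Fin n → ℝ) (hθV : Vr r θ = V)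
    (k : ℕ) (j : Fin k → ℕ) (sg : Fin k → ℝ) (hknot : IsKnotSeq r n θ k j sg) :
    tanCone (Kset r n V) θ =
      {α : Fin n → ℝ |
        (∑ i ∈ Finset.range (k + 1),
            Vab (DD (r - 1) α) (jext n r k j i) (jext n r k j (i + 1) - 1)) ≤
          ∑ i : Fin k, sg i * (DD (r - 1) α (j i - 2) - DD (r - 1) α (j i - 1))} := by

  classical
  obtain ⟨r', rfl⟩ : ∃ r', r = r' + 1 := ⟨r - 1, by omega⟩
  obtain ⟨hjmono, hjrange, hchar, hsg⟩ := hknot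
  simp only [Nat.add_sub_cancel] at hchar hsg ⊢
  set q : ℕ → ℕ := jext n (r'+1) k j with hqdef
  have hq0 : q 0 = 1 := by simp [hqdef, jext]
  have hqk1 : q (k+1) = n - (r'+1) + 2 := by simp [hqdef, jext]
  have hqj : ∀ i : Fin k, q (i.1+1) = j i := by
    intro i; simp [hqdef, jext, i.isLt]
  have hmono : ∀ i ≤ k, q i < q (i+1) := by
    intro i hi
    rcases Nat.eq_zero_or_pos i with rfl | hipos
    · rcases Nat.eq_zero_or_pos k with rfl | hk
      · have h1 : q (0+1) = n - (r'+1) + 2 := by simp [hqdef, jext]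
        omega
      · have h1 : q (0+1) = j ⟨0, hk⟩ := hqj ⟨0, hk⟩
        have h2 := (hjrange ⟨0, hk⟩).1
        omega
    · have hi1 : q i = j ⟨i-1, by omega⟩ := by
        have h := hqj ⟨i-1, by omega⟩
        simpa [Nat.sub_add_cancel hipos] using h
      rcases eq_or_lt_of_le hi with rfl | hik
      · have h2 := (hjrange ⟨i-1, by omega⟩).2
        have h3 : q (i+1) = n - (r'+1) + 2 := by simp [hqdef, jext]
        omega
      · have h4 : q (i+1) = j ⟨i, hik⟩ := hqj ⟨i, hik⟩
        have h5 := hjmono (show (⟨i-1, by omega⟩ : Fin k) < ⟨i, hik⟩ from by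
          simp only [Fin.mk_lt_mk]; omega)
        omega
  have hqlow := q_lower k q hq0 hmono
  have hmono' : ∀ a b, a ≤ b → b ≤ k + 1 → q a ≤ q b := by
    have key : ∀ d a, a + d ≤ k + 1 → q a ≤ q (a + d) := by
      intro d
      induction d with
      | zero => intro a _; simp
      | succ d ih =>
        intro a h
        have h1 := ih a (by omega)
        have h2 := hmono (a+d) (by omega)
        have h3 : a + (d+1) = (a+d) + 1 := by omega
        rw [h3]; omega
    intro a b hab hbk
    have h := key (b - a) a (by omega)
    rwa [Nat.add_sub_cancel' hab] at h
  have hlt : ∀ a b, a ≤ k+1 → b ≤ k+1 → q a < q b → a < b := by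
    intro a b ha hb h
    by_contra hc
    push_neg at hc
    have := hmono' b a hc ha
    omega
  have hnoknot : ∀ i ∈ Finset.range (k+1), ∀ t ∈ Finset.Ico (q i - 1) (q (i+1) - 2),
      DD r' θ (t+1) = DD r' θ t := by
    intro i hi t ht
    rw [Finset.mem_range] at hi
    rw [Finset.mem_Ico] at ht
    have hqi := hqlow i (by omega)
    have hup : q (i+1) ≤ q (k+1) := hmono' (i+1) (k+1) (by omega) le_rfl
    have hm := hchar (t+2) (by omega) (by omega)
    by_contra hne
    obtain ⟨i', hji'⟩ := hm.mp (by
      have e1 : t + 2 - 2 = t := by omega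
      have e2 : t + 2 - 1 = t + 1 := by omega
      rw [e1, e2]
      exact fun h => hne h.symm)
    have hq' : q (i'.1+1) = t + 2 := by rw [hqj i', hji']
    have hik := i'.isLt
    have hlt1 : i < i'.1 + 1 := hlt i (i'.1+1) (by omega) (by omega) (by omega)
    have hlt2 : i'.1 + 1 < i + 1 := hlt (i'.1+1) (i+1) (by omega) (by omega) (by omega)
    omega
  have hknotne : ∀ i : Fin k, DD r' θ (j i - 2) ≠ DD r' θ (j i - 1) := by
    intro i
    exact (hchar (j i) (hjrange i).1 (hjrange i).2).mpr ⟨i, rfl⟩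
  have hstep : ∀ i : Fin k, (j i - 2) + 1 = j i - 1 := by
    intro i; have := (hjrange i).1; omega
  have hsgn : ∀ i : Fin k, sg i = if 0 < DD r' θ (j i - 1) - DD r' θ (j i - 2) then 1 else -1 := by
    intro i; rw [hsg i]; simp [sub_pos]
  have hnpos : (0:ℝ) < n := by
    have h : 0 < n := by omega
    exact_mod_cast h
  have hC : Dl1 (r'+1) θ = V * (n:ℝ) ^ (1 - ((r'+1 : ℕ) : ℤ)) := by
    have hz : (((r'+1:ℕ):ℤ) - 1) + (1 - ((r'+1:ℕ):ℤ)) = 0 := by ring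
    have h1 : ((n:ℝ)) ^ (((r'+1 : ℕ) : ℤ) - 1) * ((n:ℝ)) ^ (1 - ((r'+1 : ℕ) : ℤ)) = 1 := by
      rw [← zpow_add₀ (ne_of_gt hnpos), hz, zpow_zero]
    rw [← hθV, Vr, mul_comm ((n:ℝ) ^ (((r'+1:ℕ):ℤ) - 1)) (Dl1 (r'+1) θ), mul_assoc, h1, mul_one]
  have hpart : ∀ h : ℕ → ℝ, ∑ t ∈ Finset.range (n - (r'+1)), h t =
      (∑ i ∈ Finset.range (k+1), ∑ t ∈ Finset.Ico (q i - 1) (q (i+1) - 2), h t)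
        + ∑ i ∈ Finset.range k, h (q (i+1) - 2) := by
    intro h
    have hp := sum_partition h k q hq0 hmono
    have e : q (k+1) - 2 = n - (r'+1) := by omega
    rwa [e] at hp
  have hknotsum : ∀ h : ℕ → ℝ,
      (∑ i ∈ Finset.range k, h (q (i+1) - 2)) = ∑ i : Fin k, h (j i - 2) := by
    intro h
    rw [← Fin.sum_univ_eq_sum_range (fun i => h (q (i+1) - 2)) k]
    exact Finset.sum_congr rfl fun i _ => by rw [hqj i]
  have hdec : ∀ x : Fin n → ℝ, Dl1 (r'+1) x =
      (∑ i ∈ Finset.range (k+1), ∑ t ∈ Finset.Ico (q i - 1) (q (i+1) - 2),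
        |DD r' x (t+1) - DD r' x t|)
        + ∑ i : Fin k, |DD r' x (j i - 1) - DD r' x (j i - 2)| := by
    intro x
    rw [Dl1]
    have e1 : ∑ t ∈ Finset.range (n - (r'+1)), |DD (r'+1) x t|
        = ∑ t ∈ Finset.range (n - (r'+1)), |DD r' x (t+1) - DD r' x t| :=
      Finset.sum_congr rfl fun t _ => by rw [DD_succ]
    rw [e1, hpart (fun t => |DD r' x (t+1) - DD r' x t|),
      hknotsum (fun t => |DD r' x (t+1) - DD r' x t|)]
    congr 1
    exact Finset.sum_congr rfl fun i _ => by rw [hstep i]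
  have hVabeq : ∀ x : Fin n → ℝ,
      (∑ i ∈ Finset.range (k+1), Vab (DD r' x) (q i) (q (i+1) - 1))
        = ∑ i ∈ Finset.range (k+1), ∑ t ∈ Finset.Ico (q i - 1) (q (i+1) - 2),
            |DD r' x (t+1) - DD r' x t| := by
    intro x
    refine Finset.sum_congr rfl fun i _ => ?_
    rw [Vab, show q (i+1) - 1 - 1 = q (i+1) - 2 from by omega]
  have hθseg0 : (∑ i ∈ Finset.range (k+1), ∑ t ∈ Finset.Ico (q i - 1) (q (i+1) - 2),
      |DD r' θ (t+1) - DD r' θ t|) = 0 := by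
    refine Finset.sum_eq_zero fun i hi => Finset.sum_eq_zero fun t ht => ?_
    rw [hnoknot i hi t ht]
    simp
  have hθknot : (∑ i : Fin k, |DD r' θ (j i - 1) - DD r' θ (j i - 2)|)
      = V * (n:ℝ) ^ (1 - ((r'+1 : ℕ) : ℤ)) := by
    have h := hdec θ
    rw [hθseg0, zero_add] at h
    rw [← h]
    exact hC
  have hcore : ∀ η ∈ Kset (r'+1) n V,
      (∑ i ∈ Finset.range (k+1), Vab (DD r' (η - θ)) (q i) (q (i+1) - 1))
        ≤ ∑ i : Fin k, sg i * (DD r' (η - θ) (j i - 2) - DD r' (η - θ) (j i - 1)) := by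
    intro η hη
    have hη' : Dl1 (r'+1) η ≤ V * (n:ℝ) ^ (1 - ((r'+1 : ℕ) : ℤ)) := hη
    have hdη := hdec η
    have hseg : (∑ i ∈ Finset.range (k+1), ∑ t ∈ Finset.Ico (q i - 1) (q (i+1) - 2),
        |DD r' η (t+1) - DD r' η t|)
        = ∑ i ∈ Finset.range (k+1), Vab (DD r' (η - θ)) (q i) (q (i+1) - 1) := by
      rw [hVabeq]
      refine Finset.sum_congr rfl fun i hi => Finset.sum_congr rfl fun t ht => ?_
      rw [DD_sub, DD_sub, hnoknot i hi t ht]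
      ring_nf
    have hknotb : ∀ i : Fin k,
        |DD r' θ (j i - 1) - DD r' θ (j i - 2)|
          + (- (sg i * (DD r' (η - θ) (j i - 2) - DD r' (η - θ) (j i - 1))))
          ≤ |DD r' η (j i - 1) - DD r' η (j i - 2)| := by
      intro i
      have ha : DD r' θ (j i - 1) - DD r' θ (j i - 2) ≠ 0 :=
        sub_ne_zero.mpr (Ne.symm (hknotne i))
      have h := abs_add_sign_le (DD r' θ (j i - 1) - DD r' θ (j i - 2))
        (DD r' (η - θ) (j i - 1) - DD r' (η - θ) (j i - 2)) ha
      rw [← hsgn i] at h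
      have he : DD r' η (j i - 1) - DD r' η (j i - 2)
          = (DD r' θ (j i - 1) - DD r' θ (j i - 2))
            + (DD r' (η - θ) (j i - 1) - DD r' (η - θ) (j i - 2)) := by
        rw [DD_sub, DD_sub]; ring
      rw [he, show - (sg i * (DD r' (η - θ) (j i - 2) - DD r' (η - θ) (j i - 1)))
        = sg i * (DD r' (η - θ) (j i - 1) - DD r' (η - θ) (j i - 2)) from by ring]
      exact h
    have hsumb := Finset.sum_le_sum (fun i (_ : i ∈ Finset.univ) => hknotb i)
    rw [Finset.sum_add_distrib, Finset.sum_neg_distrib] at hsumb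
    rw [hdη, hseg] at hη'
    rw [hθknot] at hsumb
    linarith
  have hhomF : ∀ (c : ℝ), 0 ≤ c → ∀ x : Fin n → ℝ,
      (∑ i ∈ Finset.range (k+1), Vab (DD r' (c • x)) (q i) (q (i+1) - 1))
        = c * ∑ i ∈ Finset.range (k+1), Vab (DD r' x) (q i) (q (i+1) - 1) := by
    intro c hc x
    rw [hVabeq, hVabeq, Finset.mul_sum]
    refine Finset.sum_congr rfl fun i _ => ?_
    rw [Finset.mul_sum]
    refine Finset.sum_congr rfl fun t _ => ?_
    rw [DD_smul, DD_smul, ← mul_sub, abs_mul, abs_of_nonneg hc]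
  have hhomG : ∀ (c : ℝ) (x : Fin n → ℝ),
      (∑ i : Fin k, sg i * (DD r' (c • x) (j i - 2) - DD r' (c • x) (j i - 1)))
        = c * ∑ i : Fin k, sg i * (DD r' x (j i - 2) - DD r' x (j i - 1)) := by
    intro c x
    rw [Finset.mul_sum]
    refine Finset.sum_congr rfl fun i _ => ?_
    rw [DD_smul, DD_smul]; ring
  ext α
  simp only [Set.mem_setOf_eq]
  constructor
  · intro hα
    have hsub : {w : Fin n → ℝ | ∃ c : ℝ, 0 ≤ c ∧ ∃ η ∈ Kset (r'+1) n V, w = c • (η - θ)}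
        ⊆ {x : Fin n → ℝ | (∑ i ∈ Finset.range (k+1), Vab (DD r' x) (q i) (q (i+1) - 1))
            ≤ ∑ i : Fin k, sg i * (DD r' x (j i - 2) - DD r' x (j i - 1))} := by
      rintro w ⟨c, hc, η, hη, rfl⟩
      simp only [Set.mem_setOf_eq]
      rw [hhomF c hc (η - θ), hhomG c (η - θ)]
      exact mul_le_mul_of_nonneg_left (hcore η hη) hc
    have hclosed : IsClosed {x : Fin n → ℝ |
        (∑ i ∈ Finset.range (k+1), Vab (DD r' x) (q i) (q (i+1) - 1))
          ≤ ∑ i : Fin k, sg i * (DD r' x (j i - 2) - DD r' x (j i - 1))} := by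
      apply isClosed_le
      · refine continuous_finset_sum _ fun i _ => ?_
        simp only [Vab]
        refine continuous_finset_sum _ fun t _ => ?_
        exact ((DD_cont r' (t+1)).sub (DD_cont r' t)).abs
      · refine continuous_finset_sum _ fun i _ => ?_
        exact continuous_const.mul ((DD_cont r' (j i - 2)).sub (DD_cont r' (j i - 1)))
    exact closure_minimal hsub hclosed hα
  · intro hα
    set T : Finset ℝ := insert 1 (Finset.image (fun i : Fin k =>
      |DD r' θ (j i - 1) - DD r' θ (j i - 2)|
        / (|DD r' α (j i - 1) - DD r' α (j i - 2)| + 1)) Finset.univ) with hT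
    have hTne : T.Nonempty := ⟨1, Finset.mem_insert_self _ _⟩
    have hcpos : 0 < T.min' hTne := by
      rw [Finset.lt_min'_iff]
      intro b hb
      rcases Finset.mem_insert.mp hb with rfl | hb
      · norm_num
      · obtain ⟨i, _, rfl⟩ := Finset.mem_image.mp hb
        have h1 : DD r' θ (j i - 1) - DD r' θ (j i - 2) ≠ 0 :=
          sub_ne_zero.mpr (Ne.symm (hknotne i))
        have h2 : 0 < |DD r' θ (j i - 1) - DD r' θ (j i - 2)| := abs_pos.mpr h1
        positivity
    set c := T.min' hTne with hcdef
    have hcle : ∀ i : Fin k,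
        c * |DD r' α (j i - 1) - DD r' α (j i - 2)|
          ≤ |DD r' θ (j i - 1) - DD r' θ (j i - 2)| := by
      intro i
      have h1 : c ≤ |DD r' θ (j i - 1) - DD r' θ (j i - 2)|
          / (|DD r' α (j i - 1) - DD r' α (j i - 2)| + 1) :=
        Finset.min'_le T _ (Finset.mem_insert_of_mem
          (Finset.mem_image_of_mem _ (Finset.mem_univ i)))
      have hd : (0:ℝ) ≤ |DD r' α (j i - 1) - DD r' α (j i - 2)| := abs_nonneg _
      have hd1 : (0:ℝ) < |DD r' α (j i - 1) - DD r' α (j i - 2)| + 1 := by linarith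
      calc c * |DD r' α (j i - 1) - DD r' α (j i - 2)|
          ≤ (|DD r' θ (j i - 1) - DD r' θ (j i - 2)|
              / (|DD r' α (j i - 1) - DD r' α (j i - 2)| + 1))
              * |DD r' α (j i - 1) - DD r' α (j i - 2)| :=
            mul_le_mul_of_nonneg_right h1 hd
        _ ≤ (|DD r' θ (j i - 1) - DD r' θ (j i - 2)|
              / (|DD r' α (j i - 1) - DD r' α (j i - 2)| + 1))
              * (|DD r' α (j i - 1) - DD r' α (j i - 2)| + 1) :=
            mul_le_mul_of_nonneg_left (by linarith) (by positivity)
        _ = |DD r' θ (j i - 1) - DD r' θ (j i - 2)| := div_mul_cancel₀ _ (ne_of_gt hd1)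
    have hmem : θ + c • α ∈ Kset (r'+1) n V := by
      show Dl1 (r'+1) (θ + c • α) ≤ V * (n:ℝ) ^ (1 - ((r'+1:ℕ):ℤ))
      rw [hdec]
      have hseg : (∑ i ∈ Finset.range (k+1), ∑ t ∈ Finset.Ico (q i - 1) (q (i+1) - 2),
          |DD r' (θ + c • α) (t+1) - DD r' (θ + c • α) t|)
          = c * ∑ i ∈ Finset.range (k+1), Vab (DD r' α) (q i) (q (i+1) - 1) := by
        rw [hVabeq, Finset.mul_sum]
        refine Finset.sum_congr rfl fun i hi => ?_
        rw [Finset.mul_sum]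
        refine Finset.sum_congr rfl fun t ht => ?_
        rw [DD_add_smul, DD_add_smul, hnoknot i hi t ht,
          show DD r' θ t + c * DD r' α (t+1) - (DD r' θ t + c * DD r' α t)
            = c * (DD r' α (t+1) - DD r' α t) from by ring,
          abs_mul, abs_of_nonneg hcpos.le]
      have e : ∀ i : Fin k, |DD r' (θ + c • α) (j i - 1) - DD r' (θ + c • α) (j i - 2)|
          = |DD r' θ (j i - 1) - DD r' θ (j i - 2)|
            + sg i * (c * (DD r' α (j i - 1) - DD r' α (j i - 2))) := by
        intro i
        have ha : DD r' θ (j i - 1) - DD r' θ (j i - 2) ≠ 0 :=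
          sub_ne_zero.mpr (Ne.symm (hknotne i))
        have hb : |c * (DD r' α (j i - 1) - DD r' α (j i - 2))|
            ≤ |DD r' θ (j i - 1) - DD r' θ (j i - 2)| := by
          rw [abs_mul, abs_of_nonneg hcpos.le]; exact hcle i
        have h := abs_add_sign_eq _ _ ha hb
        rw [← hsgn i] at h
        rw [show DD r' (θ + c • α) (j i - 1) - DD r' (θ + c • α) (j i - 2)
          = (DD r' θ (j i - 1) - DD r' θ (j i - 2))
            + c * (DD r' α (j i - 1) - DD r' α (j i - 2))
          from by rw [DD_add_smul, DD_add_smul]; ring]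
        exact h
      have e2 : (∑ i : Fin k, sg i * (c * (DD r' α (j i - 1) - DD r' α (j i - 2))))
          = c * (- ∑ i : Fin k, sg i * (DD r' α (j i - 2) - DD r' α (j i - 1))) := by
        rw [← Finset.sum_neg_distrib, Finset.mul_sum]
        exact Finset.sum_congr rfl fun i _ => by ring
      have hknotp : (∑ i : Fin k, |DD r' (θ + c • α) (j i - 1) - DD r' (θ + c • α) (j i - 2)|)
          = (∑ i : Fin k, |DD r' θ (j i - 1) - DD r' θ (j i - 2)|)
            + c * (- ∑ i : Fin k, sg i * (DD r' α (j i - 2) - DD r' α (j i - 1))) := by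
        calc (∑ i : Fin k, |DD r' (θ + c • α) (j i - 1) - DD r' (θ + c • α) (j i - 2)|)
            = ∑ i : Fin k, (|DD r' θ (j i - 1) - DD r' θ (j i - 2)|
                + sg i * (c * (DD r' α (j i - 1) - DD r' α (j i - 2)))) :=
              Finset.sum_congr rfl fun i _ => e i
          _ = (∑ i : Fin k, |DD r' θ (j i - 1) - DD r' θ (j i - 2)|)
                + ∑ i : Fin k, sg i * (c * (DD r' α (j i - 1) - DD r' α (j i - 2))) :=
              Finset.sum_add_distrib
          _ = _ := by rw [e2]
      rw [hseg, hknotp, hθknot]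
      nlinarith [mul_nonneg hcpos.le (sub_nonneg.mpr hα)]
    refine subset_closure ⟨c⁻¹, inv_nonneg.mpr hcpos.le, θ + c • α, hmem, ?_⟩
    funext i
    simp only [Pi.smul_apply, Pi.add_apply, Pi.sub_apply, smul_eq_mul]
    rw [add_sub_cancel_left, inv_mul_cancel_left₀ (ne_of_gt hcpos)]
end
end

section
/- Fix r ≥ 1. There exists a constant C_r > 0 depending only on r such that for every n ≥ 2r, every t > 0 and every θ ∈ ℝ^n with ‖θ‖ ≤ t, there exist indices ℓ_1, ℓ_2 ∈ {1,…,n−r+1} with (D^{(r−1)}θ)_{ℓ_1} ≤ C_r n^{(1/2)−r} t and (D^{(r−1)}θ)_{ℓ_2} ≥ −C_r n^{(1/2)−r} t. -/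
open MeasureTheory ProbabilityTheory
open scoped BigOperators

noncomputable section

/-! ### Auxiliary lemmas for stmt18 -/

open Polynomial in
lemma aux_pair_step (f : ℝ[X]) (g : ℕ → ℝ) (N : ℕ) (hN : f.natDegree + 2 ≤ N) :
    ∑ l ∈ Finset.range N, f.coeff l * dseq g l
      = ∑ l ∈ Finset.range N, ((X - 1) * f).coeff l * g l := by
  obtain ⟨M, rfl⟩ : ∃ M, N = M + 1 := ⟨N - 1, by omega⟩
  have hM : f.coeff M = 0 := Polynomial.coeff_eq_zero_of_natDegree_lt (by omega)
  have e1 : ∑ l ∈ Finset.range (M + 1), f.coeff l * dseq g l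
      = (∑ l ∈ Finset.range (M + 1), f.coeff l * g (l + 1))
        - ∑ l ∈ Finset.range (M + 1), f.coeff l * g l := by
    rw [← Finset.sum_sub_distrib]
    exact Finset.sum_congr rfl fun l _ => by simp only [dseq]; ring
  have e2 : ∑ l ∈ Finset.range (M + 1), f.coeff l * g (l + 1)
      = ∑ l ∈ Finset.range M, f.coeff l * g (l + 1) := by
    rw [Finset.sum_range_succ, hM]; ring
  have e3 : ∑ l ∈ Finset.range (M + 1), ((X : ℝ[X]) * f).coeff l * g l
      = ∑ l ∈ Finset.range M, f.coeff l * g (l + 1) := by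
    rw [Finset.sum_range_succ']
    simp [Polynomial.coeff_X_mul, Polynomial.mul_coeff_zero, Polynomial.coeff_X_zero]
  have e4 : ∑ l ∈ Finset.range (M + 1), ((X - 1 : ℝ[X]) * f).coeff l * g l
      = (∑ l ∈ Finset.range (M + 1), ((X : ℝ[X]) * f).coeff l * g l)
        - ∑ l ∈ Finset.range (M + 1), f.coeff l * g l := by
    rw [← Finset.sum_sub_distrib]
    refine Finset.sum_congr rfl fun l _ => ?_
    rw [sub_mul, one_mul, Polynomial.coeff_sub]; ring
  rw [e1, e2, e4, e3]

open Polynomial in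
lemma aux_pair_iter (s : ℕ) (f : ℝ[X]) (g : ℕ → ℝ) (N : ℕ) (hN : f.natDegree + s + 2 ≤ N) :
    ∑ l ∈ Finset.range N, f.coeff l * dseq^[s] g l
      = ∑ l ∈ Finset.range N, ((X - 1) ^ s * f).coeff l * g l := by
  induction s generalizing g with
  | zero => simp
  | succ s ih =>
    have h1 : ∑ l ∈ Finset.range N, f.coeff l * dseq^[s + 1] g l
        = ∑ l ∈ Finset.range N, ((X - 1) ^ s * f).coeff l * dseq g l := by
      simp only [Function.iterate_succ_apply]
      exact ih (dseq g) (by omega)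
    have hd1 : ((X : ℝ[X]) - 1).natDegree ≤ 1 := by
      rw [show ((X : ℝ[X]) - 1) = X - C 1 by rw [Polynomial.C_1]]
      rw [Polynomial.natDegree_X_sub_C]
    have h2 : ((X - 1 : ℝ[X]) ^ s).natDegree ≤ s :=
      Polynomial.natDegree_pow_le.trans (by
        calc s * ((X - 1 : ℝ[X])).natDegree ≤ s * 1 := Nat.mul_le_mul_left s hd1
          _ = s := by omega)
    have hdeg : ((X - 1 : ℝ[X]) ^ s * f).natDegree + 2 ≤ N := by
      have h3 := Polynomial.natDegree_mul_le (p := (X - 1 : ℝ[X]) ^ s) (q := f)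
      omega
    rw [h1, aux_pair_step _ g N hdeg]
    refine Finset.sum_congr rfl fun l _ => ?_
    congr 2
    ring

open Polynomial in
lemma aux_coeff_geom (m l : ℕ) :
    (∑ i ∈ Finset.range m, (X : ℝ[X]) ^ i).coeff l = if l < m then 1 else 0 := by
  rw [Polynomial.finset_sum_coeff]
  simp only [Polynomial.coeff_X_pow]
  rw [Finset.sum_ite_eq (Finset.range m) l (fun _ => (1 : ℝ))]
  simp [Finset.mem_range]

open Polynomial in
lemma aux_coeff_pow_nonneg (m k l : ℕ) :
    0 ≤ ((∑ i ∈ Finset.range m, (X : ℝ[X]) ^ i) ^ k).coeff l := by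
  induction k generalizing l with
  | zero =>
    simp only [pow_zero, Polynomial.coeff_one]
    split <;> norm_num
  | succ k ih =>
    rw [pow_succ, Polynomial.coeff_mul]
    refine Finset.sum_nonneg fun p _ => mul_nonneg (ih p.1) ?_
    rw [aux_coeff_geom]
    split <;> norm_num

open Polynomial in
lemma aux_degP (m : ℕ) : (∑ i ∈ Finset.range m, (X : ℝ[X]) ^ i).natDegree ≤ m - 1 := by
  apply Polynomial.natDegree_le_iff_coeff_eq_zero.mpr
  intro N hN
  rw [aux_coeff_geom, if_neg (by omega)]

open Polynomial in
lemma aux_sum_coeff (m k N : ℕ)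
    (hN : ((∑ i ∈ Finset.range m, (X : ℝ[X]) ^ i) ^ k).natDegree < N) :
    ∑ l ∈ Finset.range N, ((∑ i ∈ Finset.range m, (X : ℝ[X]) ^ i) ^ k).coeff l = (m : ℝ) ^ k := by
  have h := Polynomial.eval_eq_sum_range' hN (1 : ℝ)
  simp only [one_pow, mul_one] at h
  rw [← h]
  simp [Polynomial.eval_pow, Polynomial.eval_finset_sum]

open Polynomial in
lemma aux_Q_coeff (m s l : ℕ) (hm : 1 ≤ m) :
    (((X : ℝ[X]) ^ m - 1) ^ s * ∑ i ∈ Finset.range m, (X : ℝ[X]) ^ i).coeff l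
      = if l / m ≤ s then (-1 : ℝ) ^ (l / m + s) * (s.choose (l / m) : ℝ) else 0 := by
  have hm0 : 0 < m := hm
  have hexp : ((X : ℝ[X]) ^ m - 1) ^ s * ∑ i ∈ Finset.range m, (X : ℝ[X]) ^ i
      = ∑ j ∈ Finset.range (s + 1),
          ((-1 : ℝ) ^ (j + s) * (s.choose j : ℝ)) •
            ((∑ i ∈ Finset.range m, (X : ℝ[X]) ^ i) * X ^ (m * j)) := by
    rw [sub_pow, Finset.sum_mul]
    refine Finset.sum_congr rfl fun j _ => ?_
    rw [Polynomial.smul_eq_C_mul]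
    have hC : (Polynomial.C ((-1 : ℝ) ^ (j + s) * (s.choose j : ℝ)))
        = (-1 : ℝ[X]) ^ (j + s) * (s.choose j : ℝ[X]) := by
      simp [map_mul, map_pow]
    rw [hC, one_pow, pow_mul]
    ring
  rw [hexp, Polynomial.finset_sum_coeff]
  simp only [Polynomial.coeff_smul, Polynomial.coeff_mul_X_pow', aux_coeff_geom, smul_eq_mul]
  rw [Finset.sum_eq_single (l / m)]
  · by_cases h : l / m ≤ s
    · have h1 : m * (l / m) ≤ l := Nat.mul_div_le l m
      have h2 : l - m * (l / m) < m := by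
        have h3 := Nat.div_add_mod l m
        have h4 := Nat.mod_lt l hm0
        omega
      rw [if_pos h, if_pos h1, if_pos h2, mul_one]
    · rw [if_neg h, Nat.choose_eq_zero_of_lt (by omega)]
      simp
  · intro j hj hne
    by_cases h1 : m * j ≤ l
    · by_cases h2 : l - m * j < m
      · exfalso
        apply hne
        have hj1 : j ≤ l / m := (Nat.le_div_iff_mul_le hm0).mpr (by rwa [mul_comm])
        have hj2 : l / m ≤ j := by
          have h5 : l < (j + 1) * m := by
            have : (j + 1) * m = m * j + m := by ring
            omega
          have := (Nat.div_lt_iff_lt_mul hm0).mpr h5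
          omega
        omega
      · rw [if_pos h1, if_neg h2, mul_zero]
    · rw [if_neg h1, mul_zero]
  · intro h
    rw [Nat.choose_eq_zero_of_lt (by simp only [Finset.mem_range] at h; omega)]
    simp

open Polynomial in
lemma aux_Q_abs (m s l : ℕ) (hm : 1 ≤ m) :
    |(((X : ℝ[X]) ^ m - 1) ^ s * ∑ i ∈ Finset.range m, (X : ℝ[X]) ^ i).coeff l| ≤ 2 ^ s := by
  rw [aux_Q_coeff m s l hm]
  split
  · rename_i h
    rw [abs_mul, abs_pow, abs_neg, abs_one, one_pow, one_mul, Nat.abs_cast]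
    have hch : s.choose (l / m) ≤ 2 ^ s := by
      calc s.choose (l / m) ≤ ∑ j ∈ Finset.range (s + 1), s.choose j :=
            Finset.single_le_sum (fun j _ => Nat.zero_le _)
              (Finset.mem_range.mpr (by omega))
        _ = 2 ^ s := Nat.sum_range_choose s
    exact_mod_cast hch
  · rw [abs_zero]
    positivity

open Polynomial in
lemma aux_Q_zero (m s l : ℕ) (hm : 1 ≤ m) (hl : (s + 1) * m ≤ l) :
    (((X : ℝ[X]) ^ m - 1) ^ s * ∑ i ∈ Finset.range m, (X : ℝ[X]) ^ i).coeff l = 0 := by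
  rw [aux_Q_coeff m s l hm, if_neg]
  intro h
  have : s + 1 ≤ l / m := (Nat.le_div_iff_mul_le (by omega)).mpr hl
  omega
/-- Lemma: small entries of `D^{(r-1)}θ` for `‖θ‖ ≤ t`.  The paper
(1-indexed) entries `(D^{(r-1)}θ)_ℓ`, `ℓ ∈ {1, …, n-r+1}`, are `DD (r-1) θ l` for
`l ∈ {0, …, n-r}` here. -/
theorem stmt18 (r : ℕ) (hr : 1 ≤ r) :
    ∃ C : ℝ, 0 < C ∧
      ∀ (n : ℕ), 2 * r ≤ n → ∀ t : ℝ, 0 < t → ∀ θ : Fin n → ℝ, eunorm θ ≤ t →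
        ∃ l₁ ≤ n - r, ∃ l₂ ≤ n - r,
          DD (r - 1) θ l₁ ≤ C * (n : ℝ) ^ ((1 : ℝ) / 2 - (r : ℝ)) * t ∧
            -(C * (n : ℝ) ^ ((1 : ℝ) / 2 - (r : ℝ)) * t) ≤ DD (r - 1) θ l₂ := by
  classical
  have hr0 : (0 : ℝ) < ((4 * r : ℕ) : ℝ) := by
    have : 0 < 4 * r := by omega
    exact_mod_cast this
  refine ⟨((4 * r : ℕ) : ℝ) ^ r, by positivity, ?_⟩
  intro n hn t ht θ hθ
  have hrpos : 0 < r := hr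
  set s : ℕ := r - 1 with hs
  have hsr : s + 1 = r := by omega
  have hdm := Nat.div_add_mod n r
  have hmod := Nat.mod_lt n hrpos
  have hm1 : 1 ≤ n / r := by
    rw [Nat.le_div_iff_mul_le hrpos]; omega
  have hrm : r * (n / r) ≤ n := by omega
  have hn2rm : n < r * (n / r) + r := by omega
  set m : ℕ := n / r with hmdef
  have hrrm : r ≤ r * m := Nat.le_mul_of_pos_right r (by omega)
  set P : Polynomial ℝ := ∑ i ∈ Finset.range m, (Polynomial.X : Polynomial ℝ) ^ i with hP
  set F : Polynomial ℝ := P ^ r with hF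
  set Q : Polynomial ℝ := ((Polynomial.X : Polynomial ℝ) ^ m - 1) ^ s * P with hQ
  have hdegP : P.natDegree ≤ m - 1 := aux_degP m
  have hdegF : F.natDegree ≤ n - r := by
    calc F.natDegree ≤ r * P.natDegree := Polynomial.natDegree_pow_le
      _ ≤ r * (m - 1) := Nat.mul_le_mul_left r hdegP
      _ = r * m - r := by
        rw [show m - 1 = Nat.pred m from rfl, Nat.mul_pred]
      _ ≤ n - r := by omega
  set N : ℕ := n + r + 2 with hN
  -- the key pairing identity
  have hQeq : ((Polynomial.X : Polynomial ℝ) - 1) ^ s * F = Q := by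
    have h1 : ((Polynomial.X : Polynomial ℝ) - 1) * P = (Polynomial.X : Polynomial ℝ) ^ m - 1 := by
      rw [mul_comm]; exact geom_sum_mul (Polynomial.X : Polynomial ℝ) m
    calc ((Polynomial.X : Polynomial ℝ) - 1) ^ s * F
        = (((Polynomial.X : Polynomial ℝ) - 1) * P) ^ s * P := by
          rw [hF, ← hsr, pow_succ, mul_pow]; ring
      _ = Q := by rw [h1]
  have hkey : ∑ l ∈ Finset.range N, F.coeff l * DD s θ l
      = ∑ l ∈ Finset.range N, Q.coeff l * pad θ l := by
    have h := aux_pair_iter s F (pad θ) N (by omega)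
    rw [hQeq] at h
    simpa [DD] using h
  set Sv : ℝ := ∑ l ∈ Finset.range N, Q.coeff l * pad θ l with hSv
  -- Cauchy–Schwarz bound on Sv
  have hSv2 : Sv = ∑ l ∈ Finset.range n, Q.coeff l * pad θ l := by
    rw [hSv]
    symm
    apply Finset.sum_subset (Finset.range_subset_range.mpr (by omega))
    intro x _ hnx
    have hx : n ≤ x := by simpa [Finset.mem_range, Nat.not_lt] using hnx
    simp [pad, Nat.not_lt.mpr hx]
  have h4s : ((2 : ℝ) ^ s) ^ 2 = 4 ^ s := by
    rw [← pow_mul, mul_comm, pow_mul]; norm_num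
  have hQsq : ∑ l ∈ Finset.range n, (Q.coeff l) ^ 2 ≤ ((r * m : ℕ) : ℝ) * (4 : ℝ) ^ s := by
    have hsub : ∑ l ∈ Finset.range n, (Q.coeff l) ^ 2
        = ∑ l ∈ Finset.range (r * m), (Q.coeff l) ^ 2 := by
      symm
      apply Finset.sum_subset (Finset.range_subset_range.mpr hrm)
      intro x _ hnx
      have hx : r * m ≤ x := by simpa [Finset.mem_range, Nat.not_lt] using hnx
      rw [hQ, aux_Q_zero m s x hm1 (by rw [hsr]; omega)]
      ring
    rw [hsub]
    calc ∑ l ∈ Finset.range (r * m), (Q.coeff l) ^ 2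
        ≤ ∑ _l ∈ Finset.range (r * m), ((2 : ℝ) ^ s) ^ 2 := by
          apply Finset.sum_le_sum
          intro i _
          have h := aux_Q_abs m s i hm1
          rw [← hQ] at h
          calc (Q.coeff i) ^ 2 = |Q.coeff i| ^ 2 := (sq_abs _).symm
            _ ≤ ((2 : ℝ) ^ s) ^ 2 := by
                apply pow_le_pow_left₀ (abs_nonneg _) h
      _ = ((r * m : ℕ) : ℝ) * (4 : ℝ) ^ s := by
          rw [Finset.sum_const, Finset.card_range, nsmul_eq_mul, h4s]
  have hsqnn : 0 ≤ sqnorm θ := Finset.sum_nonneg fun i _ => sq_nonneg _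
  have hθsq : ∑ l ∈ Finset.range n, (pad θ l) ^ 2 ≤ t ^ 2 := by
    have h1 : ∑ l ∈ Finset.range n, (pad θ l) ^ 2 = sqnorm θ := by
      rw [sqnorm, ← Fin.sum_univ_eq_sum_range (fun l => (pad θ l) ^ 2) n]
      refine Finset.sum_congr rfl fun i _ => ?_
      simp [pad, i.isLt]
    have h2 : sqnorm θ = (eunorm θ) ^ 2 := (Real.sq_sqrt hsqnn).symm
    rw [h1, h2]
    exact pow_le_pow_left₀ (Real.sqrt_nonneg _) hθ 2
  have hCS : Sv ^ 2 ≤ (((r * m : ℕ) : ℝ) * (4 : ℝ) ^ s) * t ^ 2 := by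
    rw [hSv2]
    calc (∑ l ∈ Finset.range n, Q.coeff l * pad θ l) ^ 2
        ≤ (∑ l ∈ Finset.range n, (Q.coeff l) ^ 2) * ∑ l ∈ Finset.range n, (pad θ l) ^ 2 :=
          Finset.sum_mul_sq_le_sq_mul_sq _ _ _
      _ ≤ (((r * m : ℕ) : ℝ) * (4 : ℝ) ^ s) * t ^ 2 := by
          apply mul_le_mul hQsq hθsq (Finset.sum_nonneg fun i _ => sq_nonneg _) (by positivity)
  -- numeric bound
  set β : ℝ := (n : ℝ) ^ ((1 : ℝ) / 2 - (r : ℝ)) with hβ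
  have hn0 : (0 : ℝ) < (n : ℝ) := by
    have : 0 < n := by omega
    exact_mod_cast this
  have hβ0 : 0 < β := Real.rpow_pos_of_pos hn0 _
  have hr0' : (0 : ℝ) < (r : ℝ) := by exact_mod_cast hrpos
  have hm0' : (0 : ℝ) < (m : ℝ) := by exact_mod_cast hm1
  have hmge : (n : ℝ) / (2 * (r : ℝ)) ≤ (m : ℝ) := by
    rw [div_le_iff₀ (by positivity)]
    have : (n : ℝ) ≤ 2 * ((r : ℝ) * (m : ℝ)) := by
      have h : n ≤ 2 * (r * m) := by omega
      exact_mod_cast h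
    linarith
  have hpow : ((n : ℝ) / (2 * (r : ℝ))) ^ r ≤ (m : ℝ) ^ r :=
    pow_le_pow_left₀ (by positivity) hmge r
  have hid : β * ((n : ℝ) / (2 * (r : ℝ))) ^ r = Real.sqrt (n : ℝ) / (2 * (r : ℝ)) ^ r := by
    rw [div_pow, ← mul_div_assoc]
    congr 1
    rw [hβ, ← Real.rpow_natCast (n : ℝ) r, ← Real.rpow_add hn0, Real.sqrt_eq_rpow]
    norm_num
  have hC2 : (2 : ℝ) ^ s * (2 * (r : ℝ)) ^ r ≤ ((4 * r : ℕ) : ℝ) ^ r := by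
    have h1 : ((4 * r : ℕ) : ℝ) ^ r = 2 ^ r * (2 * (r : ℝ)) ^ r := by
      rw [← mul_pow]
      push_cast
      ring_nf
    rw [h1]
    have h2 : (2 : ℝ) ^ s ≤ 2 ^ r := pow_le_pow_right₀ (by norm_num) (by omega)
    have h3 : (0 : ℝ) ≤ (2 * (r : ℝ)) ^ r := by positivity
    exact mul_le_mul_of_nonneg_right h2 h3
  have hBd : (2 : ℝ) ^ s * Real.sqrt ((r * m : ℕ) : ℝ) * t
      ≤ ((4 * r : ℕ) : ℝ) ^ r * β * t * (m : ℝ) ^ r := by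
    have h1 : Real.sqrt ((r * m : ℕ) : ℝ) ≤ Real.sqrt (n : ℝ) := by
      apply Real.sqrt_le_sqrt
      exact_mod_cast hrm
    have h2 : Real.sqrt (n : ℝ) = β * ((n : ℝ) / (2 * (r : ℝ))) ^ r * (2 * (r : ℝ)) ^ r := by
      rw [hid]
      field_simp
    calc (2 : ℝ) ^ s * Real.sqrt ((r * m : ℕ) : ℝ) * t
        ≤ (2 : ℝ) ^ s * Real.sqrt (n : ℝ) * t := by
          apply mul_le_mul_of_nonneg_right _ ht.le
          exact mul_le_mul_of_nonneg_left h1 (by positivity)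
      _ = ((2 : ℝ) ^ s * (2 * (r : ℝ)) ^ r) * (β * ((n : ℝ) / (2 * (r : ℝ))) ^ r) * t := by
          rw [h2]; ring
      _ ≤ ((4 * r : ℕ) : ℝ) ^ r * (β * ((n : ℝ) / (2 * (r : ℝ))) ^ r) * t := by
          apply mul_le_mul_of_nonneg_right _ ht.le
          apply mul_le_mul_of_nonneg_right hC2 (by positivity)
      _ ≤ ((4 * r : ℕ) : ℝ) ^ r * (β * (m : ℝ) ^ r) * t := by
          apply mul_le_mul_of_nonneg_right _ ht.le
          apply mul_le_mul_of_nonneg_left _ (by positivity)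
          exact mul_le_mul_of_nonneg_left hpow hβ0.le
      _ = ((4 * r : ℕ) : ℝ) ^ r * β * t * (m : ℝ) ^ r := by ring
  have hSabs : |Sv| ≤ ((4 * r : ℕ) : ℝ) ^ r * β * t * (m : ℝ) ^ r := by
    have h2 : Sv ^ 2 ≤ ((2 : ℝ) ^ s * Real.sqrt ((r * m : ℕ) : ℝ) * t) ^ 2 := by
      refine hCS.trans_eq ?_
      rw [mul_pow, mul_pow, Real.sq_sqrt (by positivity), h4s]
      ring
    have h3 := Real.sqrt_le_sqrt h2
    rw [Real.sqrt_sq_eq_abs, Real.sqrt_sq (by positivity)] at h3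
    exact h3.trans hBd
  -- extraction of small entries
  set T : Finset ℕ := Finset.range (n - r + 1) with hT
  have hFnn : ∀ i, 0 ≤ F.coeff i := by
    intro i
    rw [hF, hP]
    exact aux_coeff_pow_nonneg m r i
  have hsumT : ∑ l ∈ T, F.coeff l * DD s θ l = Sv := by
    rw [← hkey]
    apply Finset.sum_subset (Finset.range_subset_range.mpr (by omega))
    intro x _ hnx
    have hx : n - r + 1 ≤ x := by simpa [hT, Finset.mem_range, Nat.not_lt] using hnx
    rw [Polynomial.coeff_eq_zero_of_natDegree_lt (by omega), zero_mul]
  have hsumcoeff : ∑ l ∈ T, F.coeff l = (m : ℝ) ^ r := by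
    rw [hT, hF, hP]
    exact aux_sum_coeff m r (n - r + 1) (by rw [← hP, ← hF]; omega)
  have hM0 : (0 : ℝ) < (m : ℝ) ^ r := by positivity
  set μ : ℝ := Sv / (m : ℝ) ^ r with hμ
  have hμle : μ ≤ ((4 * r : ℕ) : ℝ) ^ r * β * t := by
    rw [hμ, div_le_iff₀ hM0]
    calc Sv ≤ |Sv| := le_abs_self Sv
      _ ≤ ((4 * r : ℕ) : ℝ) ^ r * β * t * (m : ℝ) ^ r := hSabs
  have hμge : -(((4 * r : ℕ) : ℝ) ^ r * β * t) ≤ μ := by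
    rw [hμ, le_div_iff₀ hM0]
    have h1 : -|Sv| ≤ Sv := neg_abs_le Sv
    nlinarith [hSabs]
  have hμSv : (∑ l ∈ T, F.coeff l) * μ = Sv := by
    rw [hsumcoeff, hμ]
    field_simp
  have hexz : ∃ l₀ ∈ T, F.coeff l₀ ≠ 0 := by
    apply Finset.exists_ne_zero_of_sum_ne_zero
    rw [hsumcoeff]
    exact ne_of_gt hM0
  have hA : ∃ l ∈ T, DD s θ l ≤ μ := by
    by_contra hcon
    push_neg at hcon
    obtain ⟨l₀, hl₀T, hl₀⟩ := hexz
    have hlt : ∑ l ∈ T, F.coeff l * μ < ∑ l ∈ T, F.coeff l * DD s θ l := by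
      apply Finset.sum_lt_sum
      · intro i hi
        exact mul_le_mul_of_nonneg_left (hcon i hi).le (hFnn i)
      · exact ⟨l₀, hl₀T, mul_lt_mul_of_pos_left (hcon l₀ hl₀T)
          (lt_of_le_of_ne (hFnn l₀) (Ne.symm hl₀))⟩
    rw [← Finset.sum_mul, hμSv, hsumT] at hlt
    exact lt_irrefl Sv hlt
  have hB : ∃ l ∈ T, μ ≤ DD s θ l := by
    by_contra hcon
    push_neg at hcon
    obtain ⟨l₀, hl₀T, hl₀⟩ := hexz
    have hlt : ∑ l ∈ T, F.coeff l * DD s θ l < ∑ l ∈ T, F.coeff l * μ := by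
      apply Finset.sum_lt_sum
      · intro i hi
        exact mul_le_mul_of_nonneg_left (hcon i hi).le (hFnn i)
      · exact ⟨l₀, hl₀T, mul_lt_mul_of_pos_left (hcon l₀ hl₀T)
          (lt_of_le_of_ne (hFnn l₀) (Ne.symm hl₀))⟩
    rw [← Finset.sum_mul, hμSv, hsumT] at hlt
    exact lt_irrefl Sv hlt
  obtain ⟨l₁, hl₁T, hl₁⟩ := hA
  obtain ⟨l₂, hl₂T, hl₂⟩ := hB
  refine ⟨l₁, by simpa [hT, Finset.mem_range, Nat.lt_succ_iff] using hl₁T,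
    l₂, by simpa [hT, Finset.mem_range, Nat.lt_succ_iff] using hl₂T, ?_, ?_⟩
  · exact hl₁.trans hμle
  · exact hμge.trans hl₂
end
end

section
/- Fix an integer r ≥ 1 and n ≥ r+1. For every θ ∈ ℝ^n there exists η ∈ ℝ^n such that ‖D^{(r)}η‖₁ = 0 and ‖θ − η‖² ≤ n^{2r−1}·‖D^{(r)}θ‖₁². -/
open MeasureTheory ProbabilityTheory
open scoped BigOperators

noncomputable section

lemma dseq_iter_congr (r : ℕ) : ∀ (f h : ℕ → ℝ) (t : ℕ),
    (∀ s ≤ r, f (t + s) = h (t + s)) → dseq^[r] f t = dseq^[r] h t := by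
  induction r with
  | zero => intro f h t H; simpa using H 0 le_rfl
  | succ r ih =>
    intro f h t H
    rw [Function.iterate_succ_apply, Function.iterate_succ_apply]
    apply ih
    intro s hs
    simp only [dseq]
    rw [show t + s + 1 = t + (s + 1) by ring, H s (by omega), H (s + 1) (by omega)]

lemma key_lemma (r : ℕ) : ∀ f : ℕ → ℝ, ∃ g : ℕ → ℝ, (∀ t, dseq^[r + 1] g t = 0) ∧
    ∀ t, |f t - g t| ≤ (t : ℝ) ^ r * ∑ j ∈ Finset.range (t - r), |dseq^[r + 1] f j| := by
  induction r with
  | zero =>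
    intro f
    refine ⟨fun _ => f 0, fun t => by simp [dseq], fun t => ?_⟩
    have h1 : f t - f 0 = ∑ j ∈ Finset.range t, (f (j + 1) - f j) :=
      (Finset.sum_range_sub f t).symm
    simp only [pow_zero, one_mul, Nat.sub_zero, Function.iterate_one]
    calc |f t - f 0| = |∑ j ∈ Finset.range t, (f (j + 1) - f j)| := by rw [h1]
      _ ≤ ∑ j ∈ Finset.range t, |f (j + 1) - f j| := Finset.abs_sum_le_sum_abs _ _
      _ = ∑ j ∈ Finset.range t, |dseq f j| := rfl
  | succ r ih =>
    intro f
    obtain ⟨g', hg'0, hg'⟩ := ih (dseq f)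
    refine ⟨fun t => f 0 + ∑ i ∈ Finset.range t, g' i, ?_, ?_⟩
    all_goals
      have hd : dseq (fun t => f 0 + ∑ i ∈ Finset.range t, g' i) = g' := by
        funext t; simp [dseq, Finset.sum_range_succ]
    · intro t
      rw [Function.iterate_succ_apply, hd]
      exact hg'0 t
    · intro t
      have hsum : ∑ i ∈ Finset.range t, dseq f i = f t - f 0 := by
        simpa [dseq] using Finset.sum_range_sub f t
      have hft : f t - (f 0 + ∑ i ∈ Finset.range t, g' i)
          = ∑ i ∈ Finset.range t, (dseq f i - g' i) := by
        rw [Finset.sum_sub_distrib, hsum]; ring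
      have hiter : dseq^[r + 1] (dseq f) = dseq^[r + 1 + 1] f :=
        (Function.iterate_succ_apply dseq (r + 1) f).symm
      set S : ℝ := ∑ j ∈ Finset.range (t - (r + 1)), |dseq^[r + 1 + 1] f j| with hS
      have hSnonneg : (0 : ℝ) ≤ S := Finset.sum_nonneg fun _ _ => abs_nonneg _
      have hstep : ∀ i ∈ Finset.range t, |dseq f i - g' i| ≤ (t : ℝ) ^ r * S := by
        intro i hi
        rw [Finset.mem_range] at hi
        refine (hg' i).trans ?_
        have hsub : Finset.range (i - r) ⊆ Finset.range (t - (r + 1)) := by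
          apply Finset.range_subset_range.mpr; omega
        have h2 : ∑ j ∈ Finset.range (i - r), |dseq^[r + 1] (dseq f) j| ≤ S := by
          rw [hiter, hS]
          exact Finset.sum_le_sum_of_subset_of_nonneg hsub fun _ _ _ => abs_nonneg _
        have h3 : (i : ℝ) ^ r ≤ (t : ℝ) ^ r := by
          apply pow_le_pow_left₀ (by positivity)
          exact_mod_cast hi.le
        calc (i : ℝ) ^ r * ∑ j ∈ Finset.range (i - r), |dseq^[r + 1] (dseq f) j|
            ≤ (t : ℝ) ^ r * ∑ j ∈ Finset.range (i - r), |dseq^[r + 1] (dseq f) j| := by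
              apply mul_le_mul_of_nonneg_right h3
              exact Finset.sum_nonneg fun _ _ => abs_nonneg _
          _ ≤ (t : ℝ) ^ r * S := mul_le_mul_of_nonneg_left h2 (by positivity)
      calc |f t - (f 0 + ∑ i ∈ Finset.range t, g' i)|
          = |∑ i ∈ Finset.range t, (dseq f i - g' i)| := by rw [hft]
        _ ≤ ∑ i ∈ Finset.range t, |dseq f i - g' i| := Finset.abs_sum_le_sum_abs _ _
        _ ≤ ∑ i ∈ Finset.range t, (t : ℝ) ^ r * S := Finset.sum_le_sum hstep
        _ = (t : ℝ) ^ (r + 1) * S := by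
            rw [Finset.sum_const, Finset.card_range, nsmul_eq_mul]; ring

/-- Lemma: variance–variation inequality. -/
theorem stmt19 (r n : ℕ) (hr : 1 ≤ r) (hn : r + 1 ≤ n) (θ : Fin n → ℝ) :
    ∃ η : Fin n → ℝ, Dl1 r η = 0 ∧ sqnorm (θ - η) ≤ (n : ℝ) ^ (2 * r - 1) * Dl1 r θ ^ 2 := by
  obtain ⟨r', rfl⟩ : ∃ r', r = r' + 1 := ⟨r - 1, by omega⟩
  obtain ⟨g, hg0, hg⟩ := key_lemma r' (pad θ)
  refine ⟨fun i => g i.1, ?_, ?_⟩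
  · apply Finset.sum_eq_zero
    intro t ht
    rw [Finset.mem_range] at ht
    have hcongr : DD (r' + 1) (fun i : Fin n => g i.1) t = dseq^[r' + 1] g t := by
      apply dseq_iter_congr
      intro s hs
      have : t + s < n := by omega
      simp [pad, this]
    rw [hcongr, hg0 t, abs_zero]
  · have hDl1 : (0 : ℝ) ≤ Dl1 (r' + 1) θ := Finset.sum_nonneg fun _ _ => abs_nonneg _
    have hbound : ∀ i : Fin n, |θ i - g i.1| ≤ (n : ℝ) ^ r' * Dl1 (r' + 1) θ := by
      intro i
      have hpad : pad θ i.1 = θ i := by simp [pad, i.2]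
      have h1 := hg i.1
      rw [hpad] at h1
      refine h1.trans ?_
      have hsub : Finset.range (i.1 - r') ⊆ Finset.range (n - (r' + 1)) := by
        apply Finset.range_subset_range.mpr
        have := i.2; omega
      have h2 : ∑ j ∈ Finset.range (i.1 - r'), |dseq^[r' + 1] (pad θ) j| ≤ Dl1 (r' + 1) θ :=
        Finset.sum_le_sum_of_subset_of_nonneg hsub fun _ _ _ => abs_nonneg _
      have h3 : (i.1 : ℝ) ^ r' ≤ (n : ℝ) ^ r' := by
        apply pow_le_pow_left₀ (by positivity)
        exact_mod_cast i.2.le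
      calc (i.1 : ℝ) ^ r' * ∑ j ∈ Finset.range (i.1 - r'), |dseq^[r' + 1] (pad θ) j|
          ≤ (n : ℝ) ^ r' * ∑ j ∈ Finset.range (i.1 - r'), |dseq^[r' + 1] (pad θ) j| :=
            mul_le_mul_of_nonneg_right h3 (Finset.sum_nonneg fun _ _ => abs_nonneg _)
        _ ≤ (n : ℝ) ^ r' * Dl1 (r' + 1) θ := mul_le_mul_of_nonneg_left h2 (by positivity)
    have hterm : ∀ i : Fin n, (θ i - g i.1) ^ 2 ≤ ((n : ℝ) ^ r' * Dl1 (r' + 1) θ) ^ 2 := by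
      intro i
      rw [← sq_abs (θ i - g i.1)]
      exact pow_le_pow_left₀ (abs_nonneg _) (hbound i) 2
    calc sqnorm (θ - fun i => g i.1) = ∑ i : Fin n, (θ i - g i.1) ^ 2 := by
          simp [sqnorm]
      _ ≤ ∑ _i : Fin n, ((n : ℝ) ^ r' * Dl1 (r' + 1) θ) ^ 2 :=
          Finset.sum_le_sum fun i _ => hterm i
      _ = (n : ℝ) * ((n : ℝ) ^ r' * Dl1 (r' + 1) θ) ^ 2 := by
          rw [Finset.sum_const, Finset.card_univ, Fintype.card_fin, nsmul_eq_mul]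
      _ = (n : ℝ) ^ (2 * (r' + 1) - 1) * Dl1 (r' + 1) θ ^ 2 := by
          rw [show 2 * (r' + 1) - 1 = 2 * r' + 1 by omega]
          ring
end
end
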